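/- arXiv:1806.04289 — 12 statements merged into one kernel-verified Lean document; each statement's English description precedes it below -/
import Mathlib

section
/- The number of sequences (a_1, ..., a_n) of nonnegative integers whose nondecreasing rearrangement c_1 ≤ c_2 ≤ ... ≤ c_n satisfies c_i < i for all i is (n+1)^(n-1). -/
/-- The nondecreasing rearrangement of a sequence. -/
def sortedSeq {n : ℕ} (a : Fin n → ℕ) : Fin n → ℕ := a ∘ Tuple.sort a

open Finset

private lemma core_aux {m : ℕ} (P : ℕ → ℤ) (hP : ∀ j, P (j + m) = P j - 1)
    {r r' : ℕ} (h : r < m ∧ ∀ k < m, P r ≤ P (r + k))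
    (h' : r' < m ∧ ∀ k < m, P r' ≤ P (r' + k)) (hlt : r < r') : False := by
  obtain ⟨hrm, hr⟩ := h
  obtain ⟨hrm', hr'⟩ := h'
  have h1 : P r ≤ P r' := by
    have := hr (r' - r) (by omega)
    rwa [show r + (r' - r) = r' by omega] at this
  have h2 : P r' ≤ P (r + m) := by
    have := hr' (r + m - r') (by omega)
    rwa [show r' + (r + m - r') = r + m by omega] at this
  rw [hP r] at h2
  omega

private lemma core {m : ℕ} (hm : 1 ≤ m) (P : ℕ → ℤ) (hP : ∀ j, P (j + m) = P j - 1) :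
    ∃! r, r < m ∧ ∀ k < m, P r ≤ P (r + k) := by
  have hne : (Finset.range m).Nonempty := ⟨0, Finset.mem_range.2 hm⟩
  obtain ⟨r0, hr0m, hr0⟩ := Finset.exists_min_image (Finset.range m) P hne
  have hQ : ∃ r, r < m ∧ ∀ s < m, P r ≤ P s := by
    exact ⟨r0, Finset.mem_range.1 hr0m, fun s hs => hr0 s (Finset.mem_range.2 hs)⟩
  classical
  set r := Nat.find hQ with hrdef
  obtain ⟨hrm, hrmin⟩ := Nat.find_spec hQ
  have hcond : ∀ k < m, P r ≤ P (r + k) := by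
    intro k hk
    by_cases hcase : r + k < m
    · exact hrmin _ hcase
    · have hj : (r + k - m) + m = r + k := by omega
      have hjr : r + k - m < r := by omega
      have hjm : r + k - m < m := by omega
      rw [← hj, hP]
      have h1 : P r ≤ P (r + k - m) := hrmin _ hjm
      have h2 : P r ≠ P (r + k - m) := by
        intro heq
        have : r ≤ r + k - m := Nat.find_min' hQ ⟨hjm, fun s hs => heq ▸ hrmin s hs⟩
        omega
      omega
  refine ⟨r, ⟨hrm, hcond⟩, ?_⟩
  intro r' h'
  rcases lt_trichotomy r r' with h | h | h
  · exact absurd (core_aux P hP ⟨hrm, hcond⟩ h' h) not_false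
  · exact h.symm
  · exact absurd (core_aux P hP h' ⟨hrm, hcond⟩ h) not_false


variable {n : ℕ}

private def xc (b : Fin n → ZMod (n+1)) (t : ZMod (n+1)) : ℕ :=
  (univ.filter (fun i => b i = t)).card

private def Pf (b : Fin n → ZMod (n+1)) (j : ℕ) : ℤ :=
  (∑ i ∈ range j, (xc b (i : ZMod (n+1)) : ℤ)) - j

private def Qz (b : Fin n → ZMod (n+1)) : Prop :=
  ∀ k ≤ n, k ≤ (univ.filter (fun i => (b i).val < k)).card

private lemma val_eq_iff (m : ℕ) [NeZero m] (x : ZMod m) (j : ℕ) (hj : j < m) :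
    x.val = j ↔ x = (j : ZMod m) := by
  constructor
  · intro h
    apply ZMod.val_injective
    rw [h, ZMod.val_cast_of_lt hj]
  · intro h
    rw [h, ZMod.val_cast_of_lt hj]

private lemma sum_xc (b : Fin n → ZMod (n+1)) : ∑ t : ZMod (n+1), xc b t = n := by
  classical
  have := Finset.card_eq_sum_card_fiberwise
    (f := b) (s := univ) (t := univ) (fun i _ => mem_univ _)
  simpa [xc] using this.symm

private lemma Pf_period (b : Fin n → ZMod (n+1)) (j : ℕ) :
    Pf b (j + (n+1)) = Pf b j - 1 := by
  have key : ∑ i ∈ range (n+1), (xc b ((j + i : ℕ) : ZMod (n+1)) : ℤ)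
      = ∑ t : ZMod (n+1), (xc b t : ℤ) := by
    apply Finset.sum_nbij' (i := fun i => ((j + i : ℕ) : ZMod (n+1)))
      (j := fun t => (t - (j : ZMod (n+1))).val)
    · intro a _; exact mem_univ _
    · intro t _; exact mem_range.2 (ZMod.val_lt _)
    · intro a ha
      push_cast
      rw [add_sub_cancel_left, ZMod.val_cast_of_lt (mem_range.1 ha)]
    · intro t _
      push_cast
      simp [ZMod.natCast_val, ZMod.cast_id]
    · intro a _; rfl
  have h2 : ∑ t : ZMod (n+1), (xc b t : ℤ) = (n : ℤ) := by
    rw [← Nat.cast_sum, sum_xc b]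
  simp only [Pf, Finset.sum_range_add, key, h2]
  push_cast
  ring

private lemma cnt_formula (b : Fin n → ZMod (n+1)) (c : ZMod (n+1)) (k : ℕ) (hk : k ≤ n) :
    (univ.filter (fun i => (b i + c).val < k)).card
      = ∑ j ∈ range k, xc b ((j : ZMod (n+1)) - c) := by
  classical
  rw [Finset.card_eq_sum_card_fiberwise (f := fun i => (b i + c).val)
    (t := range k) (fun i hi => mem_range.2 (mem_filter.1 hi).2)]
  apply Finset.sum_congr rfl
  intro j hj
  have hjm : j < n + 1 := lt_of_lt_of_le (mem_range.1 hj) (by omega)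
  congr 1
  ext i
  simp only [mem_filter, mem_univ, true_and, xc, Finset.filter_filter]
  constructor
  · rintro ⟨h1, h2⟩
    have h3 := (val_eq_iff _ _ j hjm).1 h2
    exact eq_sub_of_add_eq h3
  · intro h
    have h3 : b i + c = (j : ZMod (n+1)) := by rw [h]; ring
    exact ⟨by rw [(val_eq_iff _ _ j hjm).2 h3]; exact mem_range.1 hj,
      (val_eq_iff _ _ j hjm).2 h3⟩

private lemma shift_char (b : Fin n → ZMod (n+1)) (r : ℕ) :
    Qz (fun i => b i + (-(r : ZMod (n+1)))) ↔ ∀ k < n+1, Pf b r ≤ Pf b (r + k) := by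
  have key : ∀ k ≤ n,
      (((univ.filter (fun i => (b i + (-(r : ZMod (n+1)))).val < k)).card : ℤ))
        = Pf b (r + k) - Pf b r + k := by
    intro k hk
    rw [cnt_formula b _ k hk]
    rw [Finset.sum_congr rfl (fun j _ => by
      show xc b ((j : ZMod (n+1)) - (-(r : ZMod (n+1)))) = xc b (((r + j : ℕ) : ZMod (n+1)))
      congr 1; push_cast; ring)]
    simp only [Pf, Finset.sum_range_add]
    push_cast
    ring
  constructor
  · intro H k hk
    have h1 := H k (by omega)
    have h2 := key k (by omega)
    have h3 : (k : ℤ) ≤ ((univ.filter (fun i => (b i + (-(r : ZMod (n+1)))).val < k)).card : ℤ) :=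
      Nat.cast_le.2 h1
    linarith
  · intro H k hk
    have h2 := key k hk
    have h1 := H k (by omega)
    have h3 : (k : ℤ) ≤ ((univ.filter (fun i => (b i + (-(r : ZMod (n+1)))).val < k)).card : ℤ) := by
      linarith
    exact_mod_cast h3

private lemma exists_unique_shift (b : Fin n → ZMod (n+1)) :
    ∃! c : ZMod (n+1), Qz (fun i => b i + c) := by
  obtain ⟨r, hr, hru⟩ := core (m := n+1) (by omega) (Pf b) (Pf_period b)
  refine ⟨-(r : ZMod (n+1)), (shift_char b r).2 hr.2, ?_⟩
  intro c hc
  set r' := (-c).val with hr'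
  have h1 : -((r' : ℕ) : ZMod (n+1)) = c := by
    simp [hr', ZMod.natCast_val, ZMod.cast_id]
  have h2 : Qz (fun i => b i + (-((r' : ℕ) : ZMod (n+1)))) := by rwa [h1]
  have h3 : r' = r := hru r' ⟨ZMod.val_lt _, (shift_char b r').1 h2⟩
  rw [← h1, h3]

private noncomputable def nrm {n : ℕ} (b : Fin n → ZMod (n+1)) : Fin n → ZMod (n+1) :=
  fun i => b i + (exists_unique_shift b).choose

private lemma Qz_nrm (b : Fin n → ZMod (n+1)) : Qz (nrm b) :=
  (exists_unique_shift b).choose_spec.1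

private lemma nrm_eq (b p : Fin n → ZMod (n+1)) (hp : Qz p) :
    nrm b = p ↔ ∃ c, b = fun i => p i + c := by
  constructor
  · intro h
    refine ⟨-(exists_unique_shift b).choose, ?_⟩
    funext i
    have := congrFun h i
    simp only [nrm] at this
    rw [← this]; ring
  · rintro ⟨c, rfl⟩
    have hq : Qz (fun i => (fun i => p i + c) i + (-c)) := by
      have : (fun i => (fun i => p i + c) i + (-c)) = p := by funext i; ring
      rwa [this]
    have := (exists_unique_shift (fun i => p i + c)).choose_spec.2 (-c) hq
    funext i
    simp only [nrm]
    rw [← this]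
    ring

private instance (b : Fin n → ZMod (n+1)) : Decidable (Qz b) := by
  unfold Qz; infer_instance

private lemma card_Qz (hn : 1 ≤ n) :
    (univ.filter (fun b : Fin n → ZMod (n+1) => Qz b)).card * (n+1) = (n+1)^n := by
  classical
  have h1 : (univ : Finset (Fin n → ZMod (n+1))).card
      = ∑ p ∈ univ.filter (fun b => Qz b), (univ.filter (fun b => nrm b = p)).card :=
    Finset.card_eq_sum_card_fiberwise (fun b _ => mem_filter.2 ⟨mem_univ _, Qz_nrm b⟩)
  have h2 : ∀ p ∈ univ.filter (fun b : Fin n → ZMod (n+1) => Qz b),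
      (univ.filter (fun b => nrm b = p)).card = n + 1 := by
    intro p hp
    have hQ := (mem_filter.1 hp).2
    have himg : univ.filter (fun b => nrm b = p)
        = Finset.image (fun c => fun i => p i + c) univ := by
      ext b
      simp only [mem_filter, mem_univ, true_and, Finset.mem_image]
      rw [nrm_eq b p hQ]
      constructor
      · rintro ⟨c, h⟩; exact ⟨c, h.symm⟩
      · rintro ⟨c, h⟩; exact ⟨c, h.symm⟩
    have hinj : Function.Injective (fun c : ZMod (n+1) => fun i : Fin n => p i + c) := by
      intro c1 c2 h
      have := congrFun h ⟨0, hn⟩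
      exact add_left_cancel this
    rw [himg, Finset.card_image_of_injective _ hinj, Finset.card_univ, ZMod.card]
  have h3 : (univ : Finset (Fin n → ZMod (n+1))).card = (n+1)^n := by
    rw [Finset.card_univ, Fintype.card_fun, ZMod.card, Fintype.card_fin]
  rw [h1, Finset.sum_congr rfl h2, Finset.sum_const, smul_eq_mul] at h3
  rw [← h3]

private lemma card_filter_val_lt (k : ℕ) (h : k ≤ n) :
    (univ.filter (fun i : Fin n => i.val < k)).card = k := by
  have heq : (univ.filter (fun i : Fin n => i.val < k)) = Finset.map (Fin.castLEEmb h) univ := by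
    ext i
    simp only [mem_filter, mem_univ, true_and, Finset.mem_map, Fin.castLEEmb,
      Function.Embedding.coeFn_mk]
    constructor
    · intro hi; exact ⟨⟨i.val, hi⟩, by ext; simp [Fin.castLE]⟩
    · rintro ⟨j, rfl⟩; exact j.isLt
  rw [heq, Finset.card_map, Finset.card_univ, Fintype.card_fin]

private lemma card_filter_sort (k : ℕ) (a : Fin n → ℕ) :
    (univ.filter (fun i => a (Tuple.sort a i) < k)).card
      = (univ.filter (fun i => a i < k)).card := by
  apply Finset.card_bij' (fun i _ => Tuple.sort a i) (fun i _ => (Tuple.sort a).symm i)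
  · intro i hi; simp at hi ⊢; exact hi
  · intro i hi; simp at hi ⊢; simpa using hi
  · intro i _; simp
  · intro i _; simp

private lemma sorted_iff (a : Fin n → ℕ) :
    (∀ i : Fin n, sortedSeq a i < i.val + 1) ↔
      ∀ k ≤ n, k ≤ (univ.filter (fun i => a i < k)).card := by
  have hmono : Monotone (a ∘ Tuple.sort a) := Tuple.monotone_sort a
  constructor
  · intro h k hk
    have hle : (univ.filter (fun i : Fin n => i.val < k))
        ⊆ univ.filter (fun i => a (Tuple.sort a i) < k) := by
      intro i hi
      have hik : i.val < k := (mem_filter.1 hi).2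
      refine mem_filter.2 ⟨mem_univ _, ?_⟩
      have h4 : a (Tuple.sort a i) < i.val + 1 := h i
      omega
    have hcc := Finset.card_le_card hle
    rw [card_filter_val_lt (n := n) k hk] at hcc
    rw [← card_filter_sort k a]
    exact hcc
  · intro h i0
    by_contra hc
    push_neg at hc
    have hsub : univ.filter (fun i => a (Tuple.sort a i) < i0.val + 1)
        ⊆ univ.filter (fun i : Fin n => i.val < i0.val) := by
      intro i hi
      have hi2 := (mem_filter.1 hi).2
      refine mem_filter.2 ⟨mem_univ _, ?_⟩
      by_contra hge
      push_neg at hge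
      have hle : i0 ≤ i := hge
      have h5 : a (Tuple.sort a i0) ≤ a (Tuple.sort a i) := hmono hle
      have h6 : i0.val + 1 ≤ a (Tuple.sort a i0) := hc
      omega
    have h1 := h (i0.val + 1) i0.isLt
    rw [← card_filter_sort (i0.val + 1) a] at h1
    have h2 := Finset.card_le_card hsub
    rw [card_filter_val_lt i0.val (le_of_lt i0.isLt)] at h2
    omega

private lemma set_eq_image :
    {a : Fin n → ℕ | ∀ i : Fin n, sortedSeq a i < i.val + 1}
      = (fun (b : Fin n → ZMod (n+1)) (i : Fin n) => (b i).val) '' {b | Qz b} := by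
  ext a
  simp only [Set.mem_setOf_eq, Set.mem_image]
  rw [sorted_iff]
  constructor
  · intro h
    have hlt : ∀ i, a i < n := by
      intro i
      have h1 := h n le_rfl
      have h2 : (univ.filter (fun i => a i < n)).card ≤ n := by
        simpa using Finset.card_filter_le univ (fun i : Fin n => a i < n)
      have h3 : univ.filter (fun i => a i < n) = univ :=
        Finset.eq_univ_of_card _ (by simp; omega)
      rw [Finset.eq_univ_iff_forall] at h3
      exact (mem_filter.1 (h3 i)).2
    refine ⟨fun i => (a i : ZMod (n+1)), ?_, ?_⟩
    · intro k hk
      have heq : (univ.filter (fun i => ((a i : ZMod (n+1))).val < k))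
          = univ.filter (fun i => a i < k) := by
        ext i
        simp only [mem_filter, mem_univ, true_and]
        rw [ZMod.val_cast_of_lt (show a i < n + 1 from (hlt i).trans (Nat.lt_succ_self n))]
      rw [heq]
      exact h k hk
    · funext i
      exact ZMod.val_cast_of_lt ((hlt i).trans (Nat.lt_succ_self n))
  · rintro ⟨b, hb, rfl⟩
    intro k hk
    exact hb k hk

/-- The number of parking functions of length `n` is `(n+1)^(n-1)`. -/
theorem stmt0 (n : ℕ) :
    Set.ncard {a : Fin n → ℕ | ∀ i : Fin n, sortedSeq a i < i.val + 1} =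
      (n + 1) ^ (n - 1) := by
  classical
  rcases Nat.eq_zero_or_pos n with rfl | hn
  · have : {a : Fin 0 → ℕ | ∀ i : Fin 0, sortedSeq a i < i.val + 1} = Set.univ := by
      ext a; simp [Fin.elim0]
    rw [this, Set.ncard_univ]
    simp [Nat.card_eq_fintype_card]
  · have hinj : Function.Injective (fun (b : Fin n → ZMod (n+1)) (i : Fin n) => (b i).val) := by
      intro b1 b2 h
      funext i
      exact ZMod.val_injective _ (congrFun h i)
    rw [set_eq_image, Set.ncard_image_of_injective _ hinj]
    have hset : {b : Fin n → ZMod (n+1) | Qz b}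
        = ↑(univ.filter (fun b : Fin n → ZMod (n+1) => Qz b)) := by
      ext b; simp
    rw [hset, Set.ncard_coe_finset]
    have hc := card_Qz hn
    have hpow : (n+1)^n = (n+1)^(n-1) * (n+1) := by
      rw [← pow_succ]
      congr 1
      omega
    rw [hpow] at hc
    exact Nat.eq_of_mul_eq_mul_right (by omega) hc
end

section
/- For n ≥ 1, the number of sequences (a_1, ..., a_n) of nonnegative integers whose nondecreasing rearrangement c_1 ≤ ... ≤ c_n satisfies c_1 = 1 and c_i < i for all 2 ≤ i ≤ n is (n-1)^(n-1). -/
/-!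
Lowering every entry by one identifies spherical parking functions of length `m + 1` with the
sequences `b : Fin (m + 1) → ZMod m` in which, for each `1 ≤ k ≤ m`, more than `k` entries have
value `< k`. By a cycle lemma, exactly one of the `m` rotations `b - s` of any such sequence has
this property: if `Φ x` is the number of points of the periodic lift of `b` in `[0, x)` minus `x`,
the rotation by `s` works iff `Φ s < Φ (s + k)` for `1 ≤ k ≤ m`, and since `Φ (x + m) = Φ x + 1`
this singles out the last minimiser of `Φ` on a period. Hence there are `m ^ (m + 1) / m = m ^ m`
of them.
-/

open Finset

theorem Int.ediv_sub_ediv_sub_eq_ite {m : ℤ} (hm : 0 < m) (d : ℤ) {k : ℤ} (hk0 : 0 ≤ k)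
    (hkm : k ≤ m) : d / m - (d - k) / m = if d % m < k then 1 else 0 := by
  have hr := Int.emod_nonneg d hm.ne'
  have hr' := Int.emod_lt_of_pos d hm
  have hd := Int.emod_add_mul_ediv d m
  split_ifs with h
  · have := ((Int.ediv_emod_unique hm (a := d - k) (r := d % m - k + m) (q := d / m - 1)).2
      ⟨by linarith, by linarith, by linarith⟩).1
    omega
  · have := ((Int.ediv_emod_unique hm (a := d - k) (r := d % m - k) (q := d / m)).2
      ⟨by linarith, by linarith, by linarith⟩).1
    omega

theorem ZMod.intCast_val_sub {m : ℕ} [NeZero m] (x s : ZMod m) :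
    ((x - s).val : ℤ) = ((x.val : ℤ) - s.val) % m := by
  rw [← ZMod.val_intCast]
  push_cast
  simp

def IsStrictWindowMin (Φ : ℕ → ℤ) (m s : ℕ) : Prop :=
  ∀ k, 1 ≤ k → k ≤ m → Φ s < Φ (s + k)

section WindowMin

variable {Φ : ℕ → ℤ} {m : ℕ}

theorem exists_isStrictWindowMin (hm : 0 < m) (hΦ : ∀ x, Φ (x + m) = Φ x + 1) :
    ∃ s < m, IsStrictWindowMin Φ m s := by
  obtain ⟨x₀, hx₀, hmin⟩ := (range m).exists_min_image Φ ⟨0, mem_range.2 hm⟩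
  -- the last minimiser of `Φ` on `[0, m)`
  set T := (range m).filter (Φ · = Φ x₀)
  have hT : T.Nonempty := ⟨x₀, mem_filter.2 ⟨hx₀, rfl⟩⟩
  obtain ⟨hsm, hΦs⟩ := mem_filter.1 (T.max'_mem hT)
  rw [mem_range] at hsm
  refine ⟨T.max' hT, hsm, fun k hk1 hkm => ?_⟩
  rcases lt_or_ge (T.max' hT + k) m with h | h
  · have hle := hmin _ (mem_range.2 h)
    have hne : Φ (T.max' hT + k) ≠ Φ x₀ := fun he => by
      have := T.le_max' _ (mem_filter.2 ⟨mem_range.2 h, he⟩)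
      omega
    omega
  · have := hmin (T.max' hT + k - m) (mem_range.2 (by omega))
    rw [← Nat.sub_add_cancel h, hΦ]
    omega

theorem IsStrictWindowMin.eq (hΦ : ∀ x, Φ (x + m) = Φ x + 1) {s t : ℕ} (hsm : s < m) (htm : t < m)
    (hs : IsStrictWindowMin Φ m s) (ht : IsStrictWindowMin Φ m t) : s = t := by
  wlog hst : s < t generalizing s t
  · rcases (not_lt.1 hst).eq_or_lt with h | h
    · exact h.symm
    · exact (this htm hsm ht hs h).symm
  have h₁ := hs (t - s) (by omega) (by omega)
  have h₂ := ht (s + m - t) (by omega) (by omega)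
  rw [Nat.add_sub_cancel' hst.le] at h₁
  rw [show t + (s + m - t) = s + m by omega, hΦ] at h₂
  omega

end WindowMin

section CycleLemma

variable {m : ℕ} {ι : Type*} [Fintype ι]

def IsSphericalParking (b : ι → ZMod m) : Prop :=
  ∀ k, 1 ≤ k → k ≤ m → k < #{i | (b i).val < k}

/-- `-⌊(v - x) / m⌋` counts the points of `v + mℕ` in `[0, x)`, so the sum counts the points of the
periodic lift of `b` in `[0, x)`. -/
def cyclePotential (b : ι → ZMod m) (x : ℕ) : ℤ :=
  -(∑ i, (((b i).val : ℤ) - x) / m) - x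

theorem cyclePotential_add_self [NeZero m] (hι : Fintype.card ι = m + 1) (b : ι → ZMod m) (x : ℕ) :
    cyclePotential b (x + m) = cyclePotential b x + 1 := by
  have hm : (m : ℤ) ≠ 0 := Nat.cast_ne_zero.2 (NeZero.ne m)
  have h : ∀ i, (((b i).val : ℤ) - (x + m : ℕ)) / m = (((b i).val : ℤ) - x) / m - 1 := fun i => by
    rw [show ((b i).val : ℤ) - (x + m : ℕ) = (b i).val - x + -1 * m by push_cast; ring,
      Int.add_mul_ediv_right _ _ hm]
    ring
  simp only [cyclePotential, h, sum_sub_distrib, sum_const, card_univ, hι]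
  push_cast
  ring

theorem natCast_card_val_sub_lt [NeZero m] (b : ι → ZMod m) (s : ZMod m) {k : ℕ} (hk : k ≤ m) :
    (#{i | (b i - s).val < k} : ℤ) =
      cyclePotential b (s.val + k) - cyclePotential b s.val + k := by
  have hm : (0 : ℤ) < m := Nat.cast_pos.2 (NeZero.pos m)
  calc (#{i | (b i - s).val < k} : ℤ)
      = ∑ i, ((((b i).val : ℤ) - s.val) / m - (((b i).val : ℤ) - (s.val + k : ℕ)) / m) := by
        rw [natCast_card_filter]
        refine sum_congr rfl fun i _ => ?_
        rw [Nat.cast_add, ← sub_sub, Int.ediv_sub_ediv_sub_eq_ite hm _ (Nat.cast_nonneg k)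
          (Nat.cast_le.2 hk), ← ZMod.intCast_val_sub]
        simp only [Nat.cast_lt]
    _ = ∑ i, (((b i).val : ℤ) - s.val) / m - ∑ i, (((b i).val : ℤ) - (s.val + k : ℕ)) / m :=
        sum_sub_distrib _ _
    _ = cyclePotential b (s.val + k) - cyclePotential b s.val + k := by
        simp only [cyclePotential]
        push_cast
        ring

theorem isSphericalParking_sub_iff [NeZero m] (b : ι → ZMod m) (s : ZMod m) :
    IsSphericalParking (fun i => b i - s) ↔ IsStrictWindowMin (cyclePotential b) m s.val := by
  simp only [IsSphericalParking, IsStrictWindowMin]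
  refine forall₂_congr fun k _ => forall_congr' fun hk => ?_
  have := natCast_card_val_sub_lt b s hk
  omega

theorem existsUnique_isSphericalParking_sub [NeZero m] (hι : Fintype.card ι = m + 1)
    (b : ι → ZMod m) : ∃! s : ZMod m, IsSphericalParking fun i => b i - s := by
  have hΦ := cyclePotential_add_self hι b
  obtain ⟨s, hsm, hs⟩ := exists_isStrictWindowMin (NeZero.pos m) hΦ
  have hval : (s : ZMod m).val = s := ZMod.val_natCast_of_lt hsm
  refine ⟨s, (isSphericalParking_sub_iff b _).2 (by rwa [hval]),
    fun t ht => ZMod.val_injective m ?_⟩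
  rw [hval]
  exact ((isSphericalParking_sub_iff b t).1 ht).eq hΦ (ZMod.val_lt t) hsm hs

theorem ncard_isSphericalParking [NeZero m] (hι : Fintype.card ι = m + 1) :
    {b : ι → ZMod m | IsSphericalParking b}.ncard = m ^ m := by
  have hbij : Function.Bijective fun p : {b : ι → ZMod m // IsSphericalParking b} × ZMod m =>
      fun i => p.1.1 i + p.2 := by
    constructor
    · rintro ⟨⟨c, hc⟩, s⟩ ⟨⟨c', hc'⟩, s'⟩ h
      have hs : s = s' := (existsUnique_isSphericalParking_sub hι fun i => c i + s).unique
        (by simpa using hc) (by simp_rw [congrFun h]; simpa using hc')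
      subst hs
      simp only [funext_iff, add_left_inj] at h
      simp [funext h]
    · intro b
      obtain ⟨s, hs, -⟩ := existsUnique_isSphericalParking_sub hι b
      exact ⟨⟨⟨_, hs⟩, s⟩, by simp⟩
  have h := Nat.card_eq_of_bijective _ hbij
  rw [Nat.card_prod, Nat.card_fun, Nat.card_zmod, Nat.card_eq_fintype_card (α := ι), hι,
    pow_succ] at h
  rw [← Nat.card_coe_set_eq]
  exact Nat.eq_of_mul_eq_mul_right (NeZero.pos m) h

end CycleLemma

theorem sortedSeq_le_iff {n : ℕ} (a : Fin n → ℕ) (i : Fin n) (t : ℕ) :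
    sortedSeq a i ≤ t ↔ i.val < #{j | a j ≤ t} := by
  rw [sortedSeq, ← Tuple.lt_card_le_iff_apply_le_of_monotone (Tuple.monotone_sort a),
    card_equiv (Tuple.sort a) (t := univ.filter fun j => a j ≤ t) (by simp)]

theorem sortedSeq_spherical_iff_card {m : ℕ} (hm : 0 < m) (h0 : 0 < m + 1) (a : Fin (m + 1) → ℕ) :
    (sortedSeq a ⟨0, h0⟩ = 1 ∧ ∀ i : Fin (m + 1), 1 ≤ i.val → sortedSeq a i < i.val + 1) ↔
      (∀ j, a j ≠ 0) ∧ ∀ k, 1 ≤ k → k ≤ m → k < #{j | a j ≤ k} := by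
  have hfirst : sortedSeq a ⟨0, h0⟩ = 1 ↔ (∀ j, a j ≠ 0) ∧ 0 < #{j | a j ≤ 1} := by
    have h₀ := sortedSeq_le_iff a ⟨0, h0⟩ 0
    have h₁ := sortedSeq_le_iff a ⟨0, h0⟩ 1
    have hzero : #{j | a j ≤ 0} = 0 ↔ ∀ j, a j ≠ 0 := by simp [filter_eq_empty_iff]
    rw [← hzero]
    simp only at h₀ h₁
    omega
  have hrest : (∀ i : Fin (m + 1), 1 ≤ i.val → sortedSeq a i < i.val + 1) ↔
      ∀ k, 1 ≤ k → k ≤ m → k < #{j | a j ≤ k} :=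
    ⟨fun h k hk hkm =>
        (sortedSeq_le_iff a ⟨k, by omega⟩ k).1 (Nat.lt_succ_iff.1 (h ⟨k, by omega⟩ hk)),
      fun h i hi => Nat.lt_succ_iff.2 ((sortedSeq_le_iff a i i).2 (h i hi (by omega)))⟩
  rw [hfirst, hrest]
  exact ⟨fun ⟨⟨ha, _⟩, hk⟩ => ⟨ha, hk⟩,
    fun ⟨ha, hk⟩ => ⟨⟨ha, by have := hk 1 le_rfl hm; omega⟩, hk⟩⟩

theorem setOf_sortedSeq_eq_image {m : ℕ} (hm : 0 < m) (h0 : 0 < m + 1) :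
    {a : Fin (m + 1) → ℕ |
        sortedSeq a ⟨0, h0⟩ = 1 ∧ ∀ i : Fin (m + 1), 1 ≤ i.val → sortedSeq a i < i.val + 1} =
      (fun b i => (b i).val + 1) '' {b : Fin (m + 1) → ZMod m | IsSphericalParking b} := by
  have : NeZero m := ⟨hm.ne'⟩
  ext a
  rw [Set.mem_ofPred_eq, sortedSeq_spherical_iff_card hm h0]
  constructor
  · rintro ⟨ha, hk⟩
    have hle : ∀ j, a j ≤ m := fun j => filter_card_eq
      (le_antisymm (card_filter_le _ _) (by simpa using hk m hm le_rfl)) j (mem_univ j)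
    have hval : ∀ j, (((a j - 1 : ℕ) : ZMod m)).val + 1 = a j := fun j => by
      rw [ZMod.val_natCast_of_lt (by have := hle j; omega)]
      have := ha j
      omega
    refine ⟨fun j => ((a j - 1 : ℕ) : ZMod m), fun k hk1 hkm => ?_, funext hval⟩
    refine (hk k hk1 hkm).trans_eq (congrArg card (filter_congr fun j _ => ?_))
    have := hval j
    dsimp only
    omega
  · rintro ⟨b, hb, rfl⟩
    exact ⟨fun j => Nat.succ_ne_zero _, hb⟩

/-- The number of spherical parking functions of length `n ≥ 1` is `(n-1)^(n-1)`. -/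
theorem stmt1 (n : ℕ) (hn : 1 ≤ n) :
    Set.ncard {a : Fin n → ℕ |
        sortedSeq a ⟨0, hn⟩ = 1 ∧ ∀ i : Fin n, 1 ≤ i.val → sortedSeq a i < i.val + 1} =
      (n - 1) ^ (n - 1) := by
  obtain ⟨m, rfl⟩ := Nat.exists_eq_add_of_le' hn
  rcases m.eq_zero_or_pos with rfl | hm
  · refine Set.ncard_eq_one.2 ⟨fun _ => 1, Set.ext fun a => ?_⟩
    have : sortedSeq a 0 = a 0 := congrArg a (Subsingleton.elim (α := Fin 1) _ _)
    simp [this, funext_iff, Fin.forall_fin_one]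
  · have : NeZero m := ⟨hm.ne'⟩
    have hinj : Function.Injective fun (b : Fin (m + 1) → ZMod m) i => (b i).val + 1 :=
      fun b b' h => funext fun i => ZMod.val_injective m (by simpa using congrFun h i)
    rw [setOf_sortedSeq_eq_image hm, Set.ncard_image_of_injective _ hinj,
      ncard_isSphericalParking (Fintype.card_fin _), Nat.add_sub_cancel]
end

section
/- The number of sequences (a_1, ..., a_n) of nonnegative integers whose nondecreasing rearrangement c_1 ≤ ... ≤ c_n satisfies either (c_i < i for all i) or (c_1 = 1 and c_i < i for all i ≥ 2) equals (n+1)^(n-1) + (n-1)^(n-1). -/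
/-!
Pollak's cyclic argument, run twice. Writing `#{a ≤ k}` for the number of entries at most `k`,
the parking functions of length `n` are the functions `b : Fin n → ℤ/(n+1)` with
`#{b ≤ k} ≥ k + 1` for `k < n`, and the spherical ones are the `b + 1` with
`b : Fin n → ℤ/(n-1)` and `#{b ≤ k} ≥ k + 2` for `k < n - 2`. For `b : Fin n → ℤ/m`, the walk
whose `j`-th step is `#b⁻¹(j mod m) - 1` has drift `n - m = ∓1` per period, and `b - c` satisfies
the counting condition exactly when the walk started at `c` stays above its starting height
(resp. strictly above). The cycle lemma says exactly one start in each period does, so each of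
the `m ^ n` functions has exactly one good translate, and there are `m ^ (n - 1)` good functions.
-/

open Finset Fin.NatCast

namespace Parking

variable {n m : ℕ}

def countLE (a : Fin n → ℕ) (k : ℕ) : ℕ := #{i | a i ≤ k}

theorem countLE_comp_perm (a : Fin n → ℕ) (σ : Equiv.Perm (Fin n)) (k : ℕ) :
    countLE (a ∘ σ) k = countLE a k :=
  card_equiv σ (by simp)

theorem countLE_add_one (a : Fin n → ℕ) (k : ℕ) :
    countLE (fun i => a i + 1) (k + 1) = countLE a k := by
  simp [countLE]

theorem countLE_le (a : Fin n → ℕ) (k : ℕ) : countLE a k ≤ n :=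
  (card_filter_le _ _).trans_eq (card_fin n)

theorem countLE_eq_iff {a : Fin n → ℕ} {k : ℕ} : countLE a k = n ↔ ∀ i, a i ≤ k := by
  simpa [countLE] using card_filter_eq_iff (s := univ) (p := fun i => a i ≤ k)

theorem forall_le_of_pred_lt_countLE {a : Fin n → ℕ} {k : ℕ} (h : n - 1 < countLE a k) :
    ∀ i, a i ≤ k :=
  countLE_eq_iff.1 (le_antisymm (countLE_le a k) (by have := countLE_le a k; omega))

theorem countLE_eq_sum (a : Fin n → ℕ) (k : ℕ) :
    countLE a k = ∑ j ∈ range (k + 1), #{i | a i = j} := by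
  rw [sum_card_fiberwise_eq_card_filter]
  simp [countLE]

theorem le_iff_lt_countLE_of_monotone {c : Fin n → ℕ} (hc : Monotone c) (i : Fin n) (k : ℕ) :
    c i ≤ k ↔ (i : ℕ) < countLE c k := by
  constructor
  · intro h
    calc (i : ℕ) < #(Iic i) := by simp
      _ ≤ countLE c k := card_le_card fun j hj => by
          simpa using (hc (mem_Iic.1 hj)).trans h
  · intro h
    by_contra! hk
    have : countLE c k ≤ #(Iio i) := card_le_card fun j hj => by
      simp only [mem_filter, mem_univ, true_and] at hj
      exact mem_Iio.2 (hc.reflect_lt (hj.trans_lt hk))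
    simp only [Fin.card_Iio] at this
    omega

theorem sortedSeq_le_iff (a : Fin n → ℕ) (i : Fin n) (k : ℕ) :
    sortedSeq a i ≤ k ↔ (i : ℕ) < countLE a k := by
  rw [sortedSeq, le_iff_lt_countLE_of_monotone (Tuple.monotone_sort a), countLE_comp_perm]

theorem sortedSeq_sort_symm (a : Fin n → ℕ) (i : Fin n) :
    sortedSeq a ((Tuple.sort a).symm i) = a i := by
  simp [sortedSeq]

theorem finite_setOf_sortedSeq_le (N : ℕ) : {a : Fin n → ℕ | ∀ i, sortedSeq a i ≤ N}.Finite :=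
  (Set.Finite.pi' fun _ => Set.finite_Iic N).subset fun a ha i => by
    simpa [sortedSeq_sort_symm] using ha ((Tuple.sort a).symm i)

def IsCycleStart (P : ℕ → ℤ) (m : ℕ) (s : ℤ) (r : ℕ) : Prop :=
  ∀ j, r < j → j < r + m → P r + s ≤ P j

section CycleLemma

variable {P : ℕ → ℤ}

theorem eq_of_isCycleStart {d s : ℤ} (hP : ∀ r, P (r + m) = P r + d) (hd : d < 2 * s)
    {r r' : ℕ} (hr : r < m) (hr' : r' < m)
    (h : IsCycleStart P m s r) (h' : IsCycleStart P m s r') : r = r' := by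
  have key : ∀ a b, a < b → b < m → IsCycleStart P m s a → IsCycleStart P m s b → False := by
    intro a b hab hbm ha hb
    have := ha b hab (by omega)
    have := hb (a + m) (by omega) (by omega)
    have := hP a
    linarith
  rcases lt_trichotomy r r' with hlt | heq | hgt
  · exact (key _ _ hlt hr' h h').elim
  · exact heq
  · exact (key _ _ hgt hr h' h).elim

theorem exists_forall_le_of_pos (P : ℕ → ℤ) (hm : 0 < m) : ∃ r < m, ∀ j < m, P r ≤ P j := by
  obtain ⟨r, hr, h⟩ := exists_min_image (range m) P ⟨0, mem_range.2 hm⟩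
  exact ⟨r, mem_range.1 hr, fun j hj => h j (mem_range.2 hj)⟩

/-- The first minimiser of `P` on `[0, m)` is a start. -/
theorem exists_isCycleStart_of_drift_neg_one (hm : 0 < m) (hP : ∀ r, P (r + m) = P r - 1) :
    ∃ r < m, IsCycleStart P m 0 r := by
  classical
  have hmin := exists_forall_le_of_pos P hm
  obtain ⟨hr, hrmin⟩ := Nat.find_spec hmin
  refine ⟨Nat.find hmin, hr, fun j hj hj' => ?_⟩
  rcases lt_or_ge j m with hjm | hjm
  · simpa using hrmin j hjm
  · obtain ⟨l, hl, hlt⟩ : ∃ l < m, P l < P (j - m) := by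
      have := Nat.find_min hmin (show j - m < Nat.find hmin by omega)
      push Not at this
      exact this (by omega)
    have := hP (j - m)
    rw [Nat.sub_add_cancel hjm] at this
    have := hrmin l hl
    linarith

/-- The last minimiser of `P` on `[0, m)` is a start. -/
theorem exists_isCycleStart_of_drift_one (hm : 0 < m) (hP : ∀ r, P (r + m) = P r + 1) :
    ∃ r < m, IsCycleStart P m 1 r := by
  classical
  obtain ⟨r₀, hr₀, hmin₀⟩ := exists_forall_le_of_pos P hm
  set r := Nat.findGreatest (fun r => ∀ j < m, P r ≤ P j) (m - 1)
  have hrmin : ∀ j < m, P r ≤ P j :=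
    Nat.findGreatest_spec (P := fun r => ∀ j < m, P r ≤ P j) (by omega : r₀ ≤ m - 1) hmin₀
  have hr : r < m := (Nat.findGreatest_le _).trans_lt (by omega)
  refine ⟨r, hr, fun j hj hj' => ?_⟩
  rcases lt_or_ge j m with hjm | hjm
  · obtain ⟨l, hl, hlt⟩ : ∃ l < m, P l < P j := by
      have := Nat.findGreatest_is_greatest hj (by omega : j ≤ m - 1)
      push Not at this
      exact this
    have := hrmin l hl
    linarith
  · have := hP (j - m)
    rw [Nat.sub_add_cancel hjm] at this
    have := hrmin (j - m) (by omega)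
    linarith

theorem existsUnique_isCycleStart {s : ℕ} (hs : s ≤ 1) (hm : 0 < m)
    (hP : ∀ r, P (r + m) = P r + (2 * s - 1)) : ∃! r, r < m ∧ IsCycleStart P m s r := by
  obtain ⟨r, hr, h⟩ : ∃ r < m, IsCycleStart P m s r := by
    interval_cases s
    · exact exists_isCycleStart_of_drift_neg_one hm fun r => by simpa [sub_eq_add_neg] using hP r
    · exact exists_isCycleStart_of_drift_one hm fun r => by simpa [sub_eq_add_neg] using hP r
  exact ⟨r, ⟨hr, h⟩, fun r' ⟨hr', h'⟩ => eq_of_isCycleStart hP (by omega) hr' hr h' h⟩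

end CycleLemma

def HasSurplus (s : ℕ) (b : Fin n → Fin m) : Prop :=
  ∀ k, k + 1 < m → k + 1 + s ≤ countLE (fun i => (b i : ℕ)) k

section Walk

variable (b : Fin n → Fin m)

def fiberCard (v : Fin m) : ℕ := #{i | b i = v}

theorem sum_fiberCard : ∑ v, fiberCard b v = n := by
  simp [fiberCard, sum_card_fiberwise_eq_card_filter]

variable [NeZero m]

def walk (r : ℕ) : ℤ := ∑ j ∈ range r, ((fiberCard b j : ℤ) - 1)

theorem walk_succ (r : ℕ) : walk b (r + 1) = walk b r + (fiberCard b r - 1) :=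
  sum_range_succ _ _

theorem walk_add_period (r : ℕ) : walk b (r + m) = walk b r + (n - m) := by
  induction r with
  | zero =>
    rw [zero_add, walk, ← Fin.sum_univ_eq_sum_range (fun j => (fiberCard b j : ℤ) - 1)]
    simp [Fin.cast_val_eq_self, sum_sub_distrib, ← Nat.cast_sum, sum_fiberCard, walk]
  | succ r ih =>
    rw [show r + 1 + m = r + m + 1 by omega, walk_succ, walk_succ, ih]
    simp only [Nat.cast_add, Fin.natCast_self, add_zero]
    ring

theorem countLE_sub (c : Fin m) {k : ℕ} (hk : k < m) :
    (countLE (fun i => ((b i - c : Fin m) : ℕ)) k : ℤ) =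
      walk b (c + k + 1) - walk b c + (k + 1) := by
  have hfiber : ∀ j ∈ range (k + 1),
      #{i | ((b i - c : Fin m) : ℕ) = j} = fiberCard b ((c + j : ℕ) : Fin m) := by
    intro j hj
    have hjm : j < m := by have := mem_range.1 hj; omega
    congr 1
    ext i
    simp only [mem_filter, mem_univ, true_and, Nat.cast_add, Fin.cast_val_eq_self]
    rw [← sub_eq_iff_eq_add', Fin.ext_iff, Fin.val_natCast, Nat.mod_eq_of_lt hjm]
  rw [countLE_eq_sum, sum_congr rfl hfiber, walk, walk, add_assoc, sum_range_add _ (c : ℕ) (k + 1)]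
  simp [sum_sub_distrib]

theorem hasSurplus_sub_iff (s : ℕ) (c : Fin m) :
    HasSurplus s (fun i => b i - c) ↔ IsCycleStart (walk b) m s c := by
  simp only [HasSurplus, IsCycleStart]
  constructor
  · intro h j hj hj'
    have := countLE_sub b c (k := j - c - 1) (by omega)
    rw [show (c : ℕ) + (j - c - 1) + 1 = j by omega] at this
    have := h (j - c - 1) (by omega)
    omega
  · intro h k hk
    have := countLE_sub b c (k := k) (by omega)
    have := h (c + k + 1) (by omega) (by omega)
    omega

theorem existsUnique_hasSurplus_sub {s : ℕ} (hs : s ≤ 1) (hnm : (n : ℤ) = m + 2 * s - 1) :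
    ∃! c : Fin m, HasSurplus s (fun i => b i - c) := by
  obtain ⟨r, ⟨hr, h⟩, huniq⟩ :=
    existsUnique_isCycleStart (P := walk b) hs (NeZero.pos m) fun r => by
      rw [walk_add_period]
      omega
  exact ⟨⟨r, hr⟩, (hasSurplus_sub_iff b s _).2 h,
    fun c hc => Fin.ext (huniq c ⟨c.isLt, (hasSurplus_sub_iff b s c).1 hc⟩)⟩

end Walk

theorem card_mul_card_eq_of_existsUnique_sub_mem {ι G : Type*} [Finite ι] [AddGroup G]
    (S : Set (ι → G)) (h : ∀ a : ι → G, ∃! c : G, (fun i => a i - c) ∈ S) :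
    Nat.card S * Nat.card G = Nat.card G ^ Nat.card ι := by
  choose c hc huniq using h
  let e : S × G ≃ (ι → G) :=
    { toFun := fun p i => p.1.1 i + p.2
      invFun := fun a => (⟨_, hc a⟩, c a)
      left_inv := fun ⟨⟨b, hb⟩, g⟩ => by
        have hcg : c (fun i => b i + g) = g := (huniq _ g (by simpa using hb)).symm
        ext <;> simp [hcg]
      right_inv := fun a => by simp }
  rw [← Nat.card_prod, Nat.card_congr e, Nat.card_fun]

theorem ncard_setOf_hasSurplus [NeZero m] {s : ℕ} (hs : s ≤ 1) (hn : 1 ≤ n)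
    (hnm : (n : ℤ) = m + 2 * s - 1) :
    {b : Fin n → Fin m | HasSurplus s b}.ncard = m ^ (n - 1) := by
  have h := card_mul_card_eq_of_existsUnique_sub_mem {b : Fin n → Fin m | HasSurplus s b}
    fun b => existsUnique_hasSurplus_sub b hs hnm
  rw [Nat.card_coe_set_eq, Nat.card_fin, Nat.card_fin,
    show m ^ n = m ^ (n - 1) * m by rw [← pow_succ, Nat.sub_add_cancel hn]] at h
  exact Nat.eq_of_mul_eq_mul_right (NeZero.pos m) h

def parkingFunctions (n : ℕ) : Set (Fin n → ℕ) :=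
  {a | ∀ i : Fin n, sortedSeq a i < i.val + 1}

def sphericalParkingFunctions (hn : 1 ≤ n) : Set (Fin n → ℕ) :=
  {a | sortedSeq a ⟨0, hn⟩ = 1 ∧ ∀ i : Fin n, 1 ≤ i.val → sortedSeq a i < i.val + 1}

theorem mem_parkingFunctions_iff {a : Fin n → ℕ} :
    a ∈ parkingFunctions n ↔ ∀ k < n, k < countLE a k :=
  ⟨fun h k hk => (sortedSeq_le_iff a ⟨k, hk⟩ k).1 (Nat.lt_succ_iff.1 (h ⟨k, hk⟩)),
    fun h i => Nat.lt_succ_iff.2 ((sortedSeq_le_iff a i i).2 (h i i.isLt))⟩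

theorem mem_sphericalParkingFunctions_iff (hn : 2 ≤ n) {a : Fin n → ℕ} :
    a ∈ sphericalParkingFunctions (one_le_two.trans hn) ↔
      (∀ i, 1 ≤ a i) ∧ ∀ k, 1 ≤ k → k < n → k < countLE a k := by
  constructor
  · rintro ⟨h0, h⟩
    refine ⟨fun i => ?_, fun k hk hkn => ?_⟩
    · rw [← sortedSeq_sort_symm a i, ← h0]
      exact Tuple.monotone_sort a (Nat.zero_le _)
    · exact (sortedSeq_le_iff a ⟨k, hkn⟩ k).1 (Nat.lt_succ_iff.1 (h ⟨k, hkn⟩ hk))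
  · rintro ⟨hpos, h⟩
    refine ⟨le_antisymm ((sortedSeq_le_iff _ _ _).2 ?_) (hpos _),
      fun i hi => Nat.lt_succ_iff.2 ((sortedSeq_le_iff _ _ _).2 (h i hi i.isLt))⟩
    have := h 1 le_rfl hn
    show 0 < countLE a 1
    omega

theorem parkingFunctions_eq_image (n : ℕ) :
    parkingFunctions n =
      (fun (b : Fin n → Fin (n + 1)) i => (b i : ℕ)) '' {b | HasSurplus 0 b} := by
  ext a
  simp only [mem_parkingFunctions_iff, Set.mem_image, Set.mem_ofPred_eq]
  constructor
  · intro h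
    have hlt : ∀ i, a i < n + 1 := fun i => by
      have := forall_le_of_pred_lt_countLE (h (n - 1) (by have := i.pos; omega)) i
      omega
    exact ⟨fun i => ⟨a i, hlt i⟩, fun k hk => h k (by omega), rfl⟩
  · rintro ⟨b, hb, rfl⟩ k hk
    exact hb k (by omega)

theorem sphericalParkingFunctions_eq_image (hn : 2 ≤ n) :
    sphericalParkingFunctions (one_le_two.trans hn) =
      (fun (b : Fin n → Fin (n - 1)) i => (b i : ℕ) + 1) '' {b | HasSurplus 1 b} := by
  ext a
  simp only [mem_sphericalParkingFunctions_iff hn, Set.mem_image, Set.mem_ofPred_eq]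
  constructor
  · rintro ⟨hpos, h⟩
    have hle : ∀ i, a i ≤ n - 1 := forall_le_of_pred_lt_countLE (h (n - 1) (by omega) (by omega))
    have hshift : (fun i => a i - 1 + 1) = a := funext fun i => Nat.sub_add_cancel (hpos i)
    refine ⟨fun i => ⟨a i - 1, by have := hle i; omega⟩, fun k hk => ?_, hshift⟩
    have := h (k + 1) (by omega) (by omega)
    rw [← hshift, countLE_add_one] at this
    exact this
  · rintro ⟨b, hb, rfl⟩
    refine ⟨fun _ => le_add_self, fun k hk hkn => ?_⟩
    obtain ⟨k, rfl⟩ : ∃ j, k = j + 1 := ⟨k - 1, by omega⟩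
    rw [countLE_add_one]
    rcases lt_or_ge (k + 1) (n - 1) with hk | hk
    · have := hb k hk
      omega
    · rw [countLE_eq_iff.2 fun i => by have := (b i).isLt; omega]
      omega

theorem ncard_parkingFunctions (hn : 1 ≤ n) : (parkingFunctions n).ncard = (n + 1) ^ (n - 1) := by
  rw [parkingFunctions_eq_image, Set.ncard_image_of_injective _ fun b b' h =>
    funext fun i => Fin.ext (congrFun h i)]
  exact ncard_setOf_hasSurplus zero_le_one hn (by push_cast; ring)

theorem sphericalParkingFunctions_one :
    sphericalParkingFunctions le_rfl = {fun _ : Fin 1 => 1} := by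
  ext a
  have hsort : sortedSeq a 0 = a 0 := congrArg a (Subsingleton.elim _ _)
  simp [sphericalParkingFunctions, Fin.forall_fin_one, funext_iff, hsort]

theorem ncard_sphericalParkingFunctions (hn : 1 ≤ n) :
    (sphericalParkingFunctions hn).ncard = (n - 1) ^ (n - 1) := by
  obtain rfl | hn := hn.eq_or_lt
  · simp [sphericalParkingFunctions_one]
  have : NeZero (n - 1) := ⟨by omega⟩
  rw [sphericalParkingFunctions_eq_image hn, Set.ncard_image_of_injective _ fun b b' h =>
    funext fun i => Fin.ext (Nat.add_right_cancel (congrFun h i))]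
  exact ncard_setOf_hasSurplus le_rfl (by omega) (by push_cast [Nat.cast_sub hn.le]; ring)

theorem finite_parkingFunctions : (parkingFunctions n).Finite :=
  (finite_setOf_sortedSeq_le n).subset fun _ ha i => by have := ha i; omega

theorem finite_sphericalParkingFunctions (hn : 1 ≤ n) : (sphericalParkingFunctions hn).Finite :=
  (finite_setOf_sortedSeq_le n).subset fun a ha i => by
    rcases Nat.eq_zero_or_pos i with hi | hi
    · rw [show i = ⟨0, hn⟩ from Fin.ext hi, ha.1]
      exact hn
    · have := ha.2 i hi
      omega

theorem disjoint_parkingFunctions_sphericalParkingFunctions (hn : 1 ≤ n) :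
    Disjoint (parkingFunctions n) (sphericalParkingFunctions hn) :=
  Set.disjoint_left.2 fun _ hA hB => by
    have := hA ⟨0, hn⟩
    rw [hB.1] at this
    simp at this

end Parking

/-- The number of sequences that are either parking functions or spherical parking
functions of length `n` is `(n+1)^(n-1) + (n-1)^(n-1)`. -/
theorem stmt2 (n : ℕ) (hn : 1 ≤ n) :
    Set.ncard {a : Fin n → ℕ |
        (∀ i : Fin n, sortedSeq a i < i.val + 1) ∨
        (sortedSeq a ⟨0, hn⟩ = 1 ∧ ∀ i : Fin n, 1 ≤ i.val → sortedSeq a i < i.val + 1)} =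
      (n + 1) ^ (n - 1) + (n - 1) ^ (n - 1) := by
  change (Parking.parkingFunctions n ∪ Parking.sphericalParkingFunctions hn).ncard = _
  rw [Set.ncard_union_eq (Parking.disjoint_parkingFunctions_sphericalParkingFunctions hn)
    Parking.finite_parkingFunctions (Parking.finite_sphericalParkingFunctions hn),
    Parking.ncard_parkingFunctions hn, Parking.ncard_sphericalParkingFunctions hn]
end

section
/- For every integer n ≥ 2, (n-1)^(n-1) equals the sum over all tuples (k_1, ..., k_{n-2}) of nonnegative integers with k_1 + ... + k_j ≤ j for each j = 1, ..., n-2, of the product of binomial coefficients C(n, k_1)·C(n - k_1, k_2)·⋯·C(n - (k_1+⋯+k_{n-3}), k_{n-2}). -/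
/-!
Group the tuples by their total `s` and let `A m s` be the weighted count of ballot tuples of
length `m` and total `s`, with binomials of top `r`. Splitting off the last entry `x` gives
`A (m + 1) s = ∑ x, C(r - (s - x), x) A m (s - x)`. Since
`C(r, t) C(r - t, s - t) = C(r, s) C(s, t)`, this is solved by
`A m s = C(r, s) (a ^ s - s a ^ (s - 1))` for `s ≤ a = m + 1` (and `A m s = 0` beyond),
thanks to the binomial identity
`∑ t, C(s, t) (a ^ t - t a ^ (t - 1)) = (a + 1) ^ s - s (a + 1) ^ (s - 1)`.
For `r = n = a + 1` the same identity at `s = a + 1` has value `0` and its two top terms are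
`0` and `-a ^ a`, hence `∑ s, A (n - 2) s = a ^ a`.
-/

open Finset

lemma sum_range_choose_mul_mul_pow_sub_one {R : Type*} [CommSemiring R] (x : R) (s : ℕ) :
    ∑ t ∈ range (s + 1), (s.choose t : R) * (t * x ^ (t - 1)) = s * (x + 1) ^ (s - 1) := by
  cases s with
  | zero => simp
  | succ s =>
    rw [sum_range_succ', add_pow, mul_sum]
    simp only [Nat.cast_zero, zero_mul, mul_zero, add_zero, Nat.add_sub_cancel, one_pow, mul_one]
    refine sum_congr rfl fun t _ => ?_
    have h := congrArg (Nat.cast : ℕ → R) (Nat.add_one_mul_choose_eq s t)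
    push_cast at h ⊢
    rw [← mul_assoc, ← h]
    ring

lemma sum_range_choose_mul_pow_sub {R : Type*} [CommRing R] (x : R) (s : ℕ) :
    ∑ t ∈ range (s + 1), (s.choose t : R) * (x ^ t - t * x ^ (t - 1)) =
      (x + 1) ^ s - s * (x + 1) ^ (s - 1) := by
  simp only [mul_sub, sum_sub_distrib, sum_range_choose_mul_mul_pow_sub_one, add_pow, one_pow,
    mul_one, mul_comm]

/-- For `s ≤ a` this is `(a - s) * a ^ (s - 1)`, the number of parking functions of length `s`
on `a - 1` spots; the truncated subtraction makes it vanish for `0 < a ≤ s`. -/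
def parkingCount (a s : ℕ) : ℕ := a ^ s - s * a ^ (s - 1)

lemma mul_pow_sub_one_le_pow {a s : ℕ} (h : s ≤ a) : s * a ^ (s - 1) ≤ a ^ s := by
  rcases Nat.eq_zero_or_pos s with rfl | hs
  · simp
  · calc s * a ^ (s - 1) ≤ a * a ^ (s - 1) := Nat.mul_le_mul_right _ h
      _ = a ^ s := mul_pow_sub_one hs.ne' a

lemma parkingCount_eq_zero {a s : ℕ} (ha : 0 < a) (h : a ≤ s) : parkingCount a s = 0 := by
  refine Nat.sub_eq_zero_of_le ?_
  calc a ^ s = a * a ^ (s - 1) := (mul_pow_sub_one (by omega) a).symm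
    _ ≤ s * a ^ (s - 1) := Nat.mul_le_mul_right _ h

lemma cast_parkingCount {a s : ℕ} (h : s ≤ a) :
    (parkingCount a s : ℤ) = (a : ℤ) ^ s - s * (a : ℤ) ^ (s - 1) := by
  rw [parkingCount, Nat.cast_sub (mul_pow_sub_one_le_pow h)]
  push_cast
  rfl

lemma sum_range_choose_mul_parkingCount {a s : ℕ} (h : s ≤ a) :
    ∑ t ∈ range (s + 1), s.choose t * parkingCount a t = parkingCount (a + 1) s := by
  zify
  rw [cast_parkingCount (by omega), sum_congr rfl fun t ht => by
    rw [cast_parkingCount (by simp at ht; omega)]]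
  push_cast
  exact sum_range_choose_mul_pow_sub (a : ℤ) s

lemma sum_range_choose_succ_mul_parkingCount {a : ℕ} (ha : 0 < a) :
    ∑ s ∈ range a, (a + 1).choose s * parkingCount a s = a ^ a := by
  have h := sum_range_choose_mul_pow_sub (a : ℤ) (a + 1)
  rw [sum_range_succ, sum_range_succ] at h
  zify
  rw [sum_congr rfl fun t ht => by rw [cast_parkingCount (by simp at ht; omega)]]
  simp only [Nat.add_sub_cancel, Nat.choose_self, Nat.choose_succ_self_right] at h
  push_cast at h ⊢
  rw [mul_pow_sub_one ha.ne', pow_succ] at h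
  linear_combination h

def IsBallot {m : ℕ} (k : Fin m → ℕ) : Prop := ∀ j : Fin m, ∑ i ≤ j, k i ≤ j + 1

instance {m : ℕ} : DecidablePred (IsBallot (m := m)) := fun _ => by
  unfold IsBallot; infer_instance

lemma IsBallot.sum_le {m : ℕ} {k : Fin m → ℕ} (h : IsBallot k) : ∑ i, k i ≤ m := by
  cases m with
  | zero => simp
  | succ m => simpa [← Fin.top_eq_last] using h (Fin.last m)

lemma isBallot_snoc {m : ℕ} {k : Fin m → ℕ} {x : ℕ} :
    IsBallot (Fin.snoc k x : Fin (m + 1) → ℕ) ↔ IsBallot k ∧ ∑ i, k i + x ≤ m + 1 := by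
  simp only [IsBallot, Fin.forall_fin_succ', Fin.sum_Iic_castSucc, Fin.snoc_castSucc,
    Fin.val_castSucc, ← Fin.top_eq_last, Iic_top, Fin.sum_snoc, Fin.val_top, Nat.add_sub_cancel]

def binomProd {m : ℕ} (r : ℕ) (k : Fin m → ℕ) : ℕ := ∏ j, (r - ∑ i < j, k i).choose (k j)

lemma binomProd_snoc {m : ℕ} (r : ℕ) (k : Fin m → ℕ) (x : ℕ) :
    binomProd r (Fin.snoc k x : Fin (m + 1) → ℕ) = binomProd r k * (r - ∑ i, k i).choose x := by
  simp [binomProd, Fin.prod_univ_castSucc, Fin.sum_Iio_castSucc, Fin.Iio_last_eq_map]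

def ballotSum (m N r s : ℕ) : ℕ :=
  ∑ k : Fin m → Fin N with IsBallot (Fin.val ∘ k) ∧ ∑ i, (k i : ℕ) = s,
    binomProd r (Fin.val ∘ k)

lemma ballotSum_zero_left (N r s : ℕ) : ballotSum 0 N r s = if s = 0 then 1 else 0 := by
  cases s <;> simp [ballotSum, IsBallot, binomProd]

lemma ballotSum_eq_zero_of_lt {m N r s : ℕ} (h : m < s) : ballotSum m N r s = 0 :=
  sum_eq_zero fun k hk => by
    obtain ⟨hb, rfl⟩ := (mem_filter.1 hk).2
    exact absurd hb.sum_le (not_le.2 h)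

lemma ballotSum_succ {m N r s : ℕ} (hsm : s ≤ m + 1) (hsN : s < N) :
    ballotSum (m + 1) N r s =
      ∑ x ∈ range (s + 1), (r - (s - x)).choose x * ballotSum m N r (s - x) := by
  have hfiber (x : ℕ) : ∑ k : Fin m → Fin N,
      (if IsBallot (Fin.snoc (Fin.val ∘ k) x : Fin (m + 1) → ℕ) ∧ ∑ i, (k i : ℕ) + x = s then
        binomProd r (Fin.snoc (Fin.val ∘ k) x : Fin (m + 1) → ℕ) else 0) =
      if x ≤ s then (r - (s - x)).choose x * ballotSum m N r (s - x) else 0 := by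
    split_ifs with hxs
    · rw [ballotSum, sum_filter, mul_sum]
      refine sum_congr rfl fun k _ => ?_
      simp only [isBallot_snoc, binomProd_snoc, Function.comp_apply]
      split_ifs with h₁ h₂ h₂
      · rw [h₂.2]; ring
      · exact absurd ⟨h₁.1.1, by omega⟩ h₂
      · exact absurd ⟨⟨h₂.1, by omega⟩, by omega⟩ h₁
      · rfl
    · exact sum_eq_zero fun k _ => if_neg fun h => hxs (by omega)
  calc ballotSum (m + 1) N r s
      = ∑ x : Fin N, ∑ k : Fin m → Fin N,
          (if IsBallot (Fin.snoc (Fin.val ∘ k) x : Fin (m + 1) → ℕ) ∧ ∑ i, (k i : ℕ) + x = s then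
            binomProd r (Fin.snoc (Fin.val ∘ k) x : Fin (m + 1) → ℕ) else 0) := by
        rw [ballotSum, sum_filter, ← (Fin.snocEquiv fun _ => Fin N).sum_comp,
          Fintype.sum_prod_type]
        simp [Fin.snocEquiv, Fin.comp_snoc, Fin.sum_univ_castSucc]
    _ = ∑ x ∈ range N, if x ≤ s then (r - (s - x)).choose x * ballotSum m N r (s - x) else 0 := by
        simp only [hfiber]
        exact Fin.sum_univ_eq_sum_range
          (fun x => if x ≤ s then (r - (s - x)).choose x * ballotSum m N r (s - x) else 0) N
    _ = _ := by
        rw [← sum_filter]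
        congr 1
        ext x
        simp only [mem_filter, mem_range]
        omega

theorem ballotSum_eq {m N : ℕ} (hmN : m < N) (r s : ℕ) :
    ballotSum m N r s = r.choose s * parkingCount (m + 1) s := by
  induction m generalizing s with
  | zero => cases s <;> simp [ballotSum_zero_left, parkingCount]
  | succ m ih =>
    rcases le_or_gt s (m + 1) with hs | hs
    · rw [ballotSum_succ hs (by omega), ← sum_range_choose_mul_parkingCount hs, mul_sum,
        ← sum_range_reflect]
      refine sum_congr rfl fun x hx => ?_
      have hxs : x ≤ s := Nat.lt_succ_iff.1 (mem_range.1 hx)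
      rw [ih (by omega), Nat.add_sub_cancel, Nat.sub_sub_self hxs, ← mul_assoc, ← mul_assoc,
        Nat.choose_mul hxs]
      ring
    · rw [ballotSum_eq_zero_of_lt hs, parkingCount_eq_zero (by omega) (by omega), mul_zero]

lemma sum_range_ballotSum (m N r : ℕ) :
    ∑ s ∈ range (m + 1), ballotSum m N r s =
      ∑ k : Fin m → Fin N with IsBallot (Fin.val ∘ k), binomProd r (Fin.val ∘ k) := by
  rw [← sum_fiberwise_of_maps_to (g := fun k : Fin m → Fin N => ∑ i, (k i : ℕ))
    (t := range (m + 1)) fun k hk => mem_range.2 (Nat.lt_succ_of_le (mem_filter.1 hk).2.sum_le)]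
  simp only [ballotSum, filter_filter]

open Finset in
/-- `(n-1)^(n-1)` equals the sum, over tuples `(k_1, …, k_{n-2})` of nonnegative
integers whose partial sums satisfy `k_1 + ⋯ + k_j ≤ j`, of the products of
binomial coefficients `C(n, k_1) C(n-k_1, k_2) ⋯ C(n-(k_1+⋯+k_{n-3}), k_{n-2})`. -/
theorem stmt4 (n : ℕ) (hn : 2 ≤ n) :
    (n - 1) ^ (n - 1) =
      ∑ k ∈ Finset.univ.filter (fun k : Fin (n - 2) → Fin n =>
          ∀ j : Fin (n - 2), (∑ i ∈ Finset.univ.filter (· ≤ j), (k i : ℕ)) ≤ j.val + 1),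
        ∏ j : Fin (n - 2),
          Nat.choose (n - ∑ i ∈ Finset.univ.filter (· < j), (k i : ℕ)) (k j) := by
  obtain ⟨m, rfl⟩ : ∃ m, n = m + 2 := ⟨n - 2, by omega⟩
  simp only [filter_ge_eq_Iic, filter_gt_eq_Iio]
  change (m + 1) ^ (m + 1) =
    ∑ k : Fin m → Fin (m + 2) with IsBallot (Fin.val ∘ k), binomProd (m + 2) (Fin.val ∘ k)
  rw [← sum_range_ballotSum, sum_congr rfl fun s _ => ballotSum_eq (by omega) _ _]
  exact (sum_range_choose_succ_mul_parkingCount m.succ_pos).symm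
end

section
/- For every integer n ≥ 2, (n-1)^(n-1) equals the sum over all tuples (k_1, ..., k_{n-2}) of nonnegative integers with k_1 + ... + k_j ≤ j for each j = 1, ..., n-2, of the multinomial-type terms (n-1)!/(k_1!·k_2!·⋯·k_{n-2}!). -/
open Finset

def Cnd (n u : ℕ) (k : Fin u → Fin n) : Prop :=
  ∀ j : Fin u, (∑ i ∈ Finset.univ.filter (· ≤ j), (k i : ℕ)) ≤ j.val + 1

instance (n u : ℕ) : DecidablePred (Cnd n u) := fun _ => by unfold Cnd; infer_instance

def V (n u s : ℕ) : ℚ :=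
  ∑ k ∈ Finset.univ.filter (fun k : Fin u → Fin n => Cnd n u k ∧ (∑ i, (k i : ℕ)) = s),
    ∏ j, (1 : ℚ) / ((k j : ℕ).factorial)

lemma sum_filter_le_castSucc {u : ℕ} (k : Fin (u+1) → ℕ) (j : Fin u) :
    (∑ i ∈ Finset.univ.filter (· ≤ j.castSucc), k i)
      = ∑ i ∈ Finset.univ.filter (· ≤ j), k i.castSucc := by
  rw [Finset.sum_filter, Finset.sum_filter, Fin.sum_univ_castSucc]
  simp [Fin.castSucc_le_castSucc_iff, (Fin.castSucc_lt_last j).not_ge]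

lemma cnd_succ {n u : ℕ} (k : Fin (u+1) → Fin n) :
    Cnd n (u+1) k ↔ Cnd n u (fun i => k i.castSucc)
      ∧ (∑ i : Fin u, (k i.castSucc : ℕ)) + (k (Fin.last u) : ℕ) ≤ u + 1 := by
  constructor
  · intro h
    refine ⟨fun j => ?_, ?_⟩
    · have := h j.castSucc
      rwa [sum_filter_le_castSucc (fun i => (k i : ℕ))] at this
    · have := h (Fin.last u)
      rw [Finset.filter_true_of_mem (fun i _ => Fin.le_last i)] at this
      rwa [Fin.sum_univ_castSucc] at this
  · rintro ⟨h1, h2⟩ j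
    induction j using Fin.lastCases with
    | last =>
      rw [Finset.filter_true_of_mem (fun i _ => Fin.le_last i), Fin.sum_univ_castSucc]
      exact h2
    | cast j =>
      rw [sum_filter_le_castSucc (fun i => (k i : ℕ))]
      exact h1 j

lemma sum_ite_eq_shift {s m n : ℕ} (hsn : s < n) (f : ℕ → ℚ) :
    (∑ a : Fin n, if m + (a : ℕ) = s then f (a : ℕ) else 0)
      = if m ≤ s then f (s - m) else 0 := by
  by_cases h : m ≤ s
  · rw [if_pos h, Finset.sum_eq_single (⟨s - m, by omega⟩ : Fin n)]
    · simp [Nat.add_sub_cancel' h]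
    · intro b _ hb
      rw [if_neg]
      intro hc
      exact hb (Fin.ext (by simp; omega))
    · simp
  · rw [if_neg h]
    exact Finset.sum_eq_zero fun a _ => by rw [if_neg]; omega

lemma V_succ {n u s : ℕ} (hs : s ≤ u + 1) (hsn : s < n) :
    V n (u+1) s = ∑ s' ∈ Finset.range (s+1), V n u s' / ((s - s').factorial : ℚ) := by
  calc V n (u+1) s
      = ∑ k : Fin (u+1) → Fin n,
          if Cnd n (u+1) k ∧ (∑ i, (k i : ℕ)) = s then ∏ j, (1:ℚ)/((k j : ℕ).factorial)
          else 0 := by rw [V, Finset.sum_filter]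
    _ = ∑ p : Fin n × (Fin u → Fin n),
          if Cnd n (u+1) (Fin.snoc p.2 p.1) ∧ (∑ i, ((Fin.snoc p.2 p.1 : Fin (u+1) → Fin n) i : ℕ)) = s
          then ∏ j, (1:ℚ)/(((Fin.snoc p.2 p.1 : Fin (u+1) → Fin n) j : ℕ).factorial)
          else 0 := by
        rw [← Equiv.sum_comp (Fin.snocEquiv (fun _ => Fin n))]
        rfl
    _ = ∑ b : Fin u → Fin n, ∑ a : Fin n,
          if Cnd n u b ∧ (∑ i, (b i : ℕ)) + (a : ℕ) = s
          then (∏ j, (1:ℚ)/((b j : ℕ).factorial)) / ((a : ℕ).factorial)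
          else 0 := by
        rw [Fintype.sum_prod_type_right]
        refine Finset.sum_congr rfl fun b _ => Finset.sum_congr rfl fun a _ => ?_
        simp only [cnd_succ, Fin.snoc_castSucc, Fin.snoc_last, Fin.sum_univ_castSucc,
          Fin.prod_univ_castSucc]
        have hiff : ((Cnd n u b ∧ (∑ i, (b i : ℕ)) + (a : ℕ) ≤ u + 1)
              ∧ (∑ i, (b i : ℕ)) + (a : ℕ) = s)
            ↔ (Cnd n u b ∧ (∑ i, (b i : ℕ)) + (a : ℕ) = s) := by
          constructor
          · rintro ⟨⟨h1, -⟩, h2⟩; exact ⟨h1, h2⟩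
          · rintro ⟨h1, h2⟩; exact ⟨⟨h1, by omega⟩, h2⟩
        simp only [hiff, mul_one_div]
    _ = ∑ b : Fin u → Fin n,
          if Cnd n u b ∧ (∑ i, (b i : ℕ)) ≤ s
          then (∏ j, (1:ℚ)/((b j : ℕ).factorial)) / ((s - ∑ i, (b i : ℕ)).factorial : ℕ)
          else 0 := by
        refine Finset.sum_congr rfl fun b _ => ?_
        by_cases hc : Cnd n u b
        · simp only [hc, true_and]
          exact sum_ite_eq_shift hsn (fun x => (∏ j, (1:ℚ)/((b j : ℕ).factorial)) / x.factorial)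
        · simp [hc]
    _ = ∑ b : Fin u → Fin n, ∑ s' ∈ Finset.range (s+1),
          if Cnd n u b ∧ (∑ i, (b i : ℕ)) = s'
          then (∏ j, (1:ℚ)/((b j : ℕ).factorial)) / ((s - s').factorial : ℕ)
          else 0 := by
        refine Finset.sum_congr rfl fun b _ => ?_
        by_cases hc : Cnd n u b ∧ (∑ i, (b i : ℕ)) ≤ s
        · rw [if_pos hc]
          rw [Finset.sum_eq_single (∑ i, (b i : ℕ))]
          · rw [if_pos ⟨hc.1, rfl⟩]
          · intro s' _ hs'
            rw [if_neg]; rintro ⟨-, h⟩; exact hs' h.symm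
          · intro h
            exact absurd (Finset.mem_range.2 (by have := hc.2; omega)) h
        · rw [if_neg hc]
          refine (Finset.sum_eq_zero fun s' hs' => ?_).symm
          rw [if_neg]
          rintro ⟨h1, h2⟩
          exact hc ⟨h1, by have := Finset.mem_range.1 hs'; omega⟩
    _ = ∑ s' ∈ Finset.range (s+1), V n u s' / ((s - s').factorial : ℚ) := by
        rw [Finset.sum_comm]
        refine Finset.sum_congr rfl fun s' _ => ?_
        rw [V, Finset.sum_div, Finset.sum_filter]

lemma V_zero (n s : ℕ) : V n 0 s = if s = 0 then 1 else 0 := by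
  rw [V, Finset.sum_filter, Fintype.sum_unique]
  simp [Cnd, eq_comm]

lemma total_le {n u : ℕ} {k : Fin u → Fin n} (h : Cnd n u k) : (∑ i, (k i : ℕ)) ≤ u := by
  cases u with
  | zero => simp
  | succ v =>
    have h2 := ((cnd_succ k).1 h).2
    rw [Fin.sum_univ_castSucc]
    exact h2

lemma sum_choose_pow (x : ℚ) (s : ℕ) :
    ∑ j ∈ Finset.range (s+1), (s.choose j : ℚ) * x^j = (x+1)^s := by
  rw [add_pow]
  refine Finset.sum_congr rfl fun j hj => ?_
  ring

lemma sum_j_choose_pow (x : ℚ) (v : ℕ) :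
    ∑ j ∈ Finset.range (v+2), (j : ℚ) * ((v+1).choose j : ℚ) * x^j
      = (v+1) * x * (x+1)^v := by
  rw [Finset.sum_range_succ']
  simp only [Nat.cast_zero, zero_mul, add_zero]
  calc ∑ i ∈ Finset.range (v+1), ((i+1 : ℕ) : ℚ) * (((v+1).choose (i+1) : ℕ) : ℚ) * x^(i+1)
      = ∑ i ∈ Finset.range (v+1), ((v:ℚ)+1) * (v.choose i : ℚ) * x^(i+1) := by
        refine Finset.sum_congr rfl fun i _ => ?_
        have h : ((v+1) * v.choose i : ℕ) = ((v+1).choose (i+1) * (i+1) : ℕ) :=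
          Nat.add_one_mul_choose_eq v i
        have hq : (((v+1) * v.choose i : ℕ) : ℚ) = (((v+1).choose (i+1) * (i+1) : ℕ) : ℚ) := by
          exact_mod_cast congrArg (Nat.cast : ℕ → ℚ) h
        push_cast at hq ⊢
        linear_combination (-(x^(i+1))) * hq
    _ = ((v:ℚ)+1) * x * ∑ i ∈ Finset.range (v+1), (v.choose i : ℚ) * x^i := by
        rw [Finset.mul_sum]
        refine Finset.sum_congr rfl fun i _ => ?_
        ring
    _ = (v+1) * x * (x+1)^v := by rw [sum_choose_pow]

lemma key_id (x : ℚ) (s : ℕ) (hs : 1 ≤ s) :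
    ∑ j ∈ Finset.range (s+1), (x - j) * (s.choose j : ℚ) * x^j
      = x * (x+1)^(s-1) * (x + 1 - s) := by
  obtain ⟨v, rfl⟩ : ∃ v, s = v + 1 := ⟨s-1, by omega⟩
  have h1 := sum_choose_pow x (v+1)
  have h2 := sum_j_choose_pow x v
  have h3 : ∑ j ∈ Finset.range (v+2), (x - j) * ((v+1).choose j : ℚ) * x^j
      = x * (∑ j ∈ Finset.range (v+2), ((v+1).choose j : ℚ) * x^j)
        - ∑ j ∈ Finset.range (v+2), (j:ℚ) * ((v+1).choose j : ℚ) * x^j := by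
    rw [Finset.mul_sum, ← Finset.sum_sub_distrib]
    exact Finset.sum_congr rfl fun j _ => by ring
  rw [show v + 1 + 1 = v + 2 from rfl, h3, h1, h2]
  simp only [Nat.add_sub_cancel]
  push_cast
  ring

lemma telescope (m : ℚ) (N : ℕ) :
    ∑ s ∈ Finset.range N, (m - s) * m^s / (s.factorial : ℚ)
      = N * m^N / (N.factorial : ℚ) := by
  induction N with
  | zero => simp
  | succ N ih =>
    rw [Finset.sum_range_succ, ih]
    have h1 : ((N+1).factorial : ℚ) = ((N:ℚ)+1) * (N.factorial : ℚ) := by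
      rw [Nat.factorial_succ]; push_cast; ring
    have h2 : (N.factorial : ℚ) ≠ 0 := Nat.cast_ne_zero.2 (Nat.factorial_ne_zero _)
    rw [h1]
    push_cast
    field_simp
    ring

lemma V_closed {n : ℕ} (t : ℕ) (htn : t + 2 ≤ n) :
    ∀ s ≤ t + 1, ((t:ℚ)+1) * V n t s
      = ((t:ℚ)+1-(s:ℚ)) * ((t:ℚ)+1)^s / (s.factorial : ℚ) := by
  induction t with
  | zero =>
    intro s hs
    interval_cases s <;> simp [V_zero]
  | succ t ih =>
    have ih' := ih (by omega)
    intro s hs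
    rcases Nat.lt_or_ge s (t+2) with hlt | hge
    · have hs1 : s ≤ t + 1 := by omega
      rw [V_succ hs1 (by omega)]
      set x : ℚ := (t:ℚ) + 1 with hx
      have hx0 : x ≠ 0 := by positivity
      rcases Nat.eq_zero_or_pos s with rfl | hpos
      · have h0 := ih' 0 (by omega)
        simp only [Nat.cast_zero, sub_zero, pow_zero, mul_one, Nat.factorial_zero,
          Nat.cast_one, div_one] at h0
        have hV0 : V n t 0 = 1 := by
          field_simp at h0
          linarith
        simp [hV0]
      · have hterm : ∀ s' ∈ Finset.range (s+1),
            V n t s' / (((s - s').factorial : ℕ) : ℚ)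
              = ((x - s') * (s.choose s' : ℚ) * x^s') / ((s.factorial : ℚ) * x) := by
          intro s' hs'
          have hs'le : s' ≤ s := by
            have := Finset.mem_range.1 hs'; omega
          have h1 := ih' s' (by omega)
          have hch : ((s.choose s' : ℕ) : ℚ)
              = (s.factorial : ℚ) / ((s'.factorial : ℚ) * (((s - s').factorial : ℕ) : ℚ)) :=
            Nat.cast_choose ℚ hs'le
          have hf1 : (s'.factorial : ℚ) ≠ 0 := Nat.cast_ne_zero.2 (Nat.factorial_ne_zero _)
          have hf2 : (((s - s').factorial : ℕ) : ℚ) ≠ 0 :=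
            Nat.cast_ne_zero.2 (Nat.factorial_ne_zero _)
          have hf3 : (s.factorial : ℚ) ≠ 0 := Nat.cast_ne_zero.2 (Nat.factorial_ne_zero _)
          have hV : V n t s' = (x - (s':ℚ)) * x ^ s' / ((s'.factorial : ℚ) * x) := by
            field_simp at h1 ⊢
            linear_combination h1
          rw [hV, hch]
          field_simp
        rw [Finset.sum_congr rfl hterm, ← Finset.sum_div, key_id x s hpos]
        have hxx : ((t+1:ℕ):ℚ) + 1 = x + 1 := by push_cast [hx]; ring
        have hpow : (x+1)^(s-1) * (x+1) = (x+1)^s := by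
          rw [← pow_succ]
          congr 1
          omega
        have hf3 : (s.factorial : ℚ) ≠ 0 := Nat.cast_ne_zero.2 (Nat.factorial_ne_zero _)
        push_cast
        rw [show ((t:ℚ)+1+1) = x + 1 from by rw [hx], ← hpow]
        field_simp
    · have hs2 : s = t + 2 := by omega
      subst hs2
      have hV : V n (t+1) (t+2) = 0 := by
        rw [V]
        refine Finset.sum_eq_zero fun k hk => ?_
        exfalso
        obtain ⟨h1, h2⟩ := Finset.mem_filter.1 hk
        have := total_le h2.1
        omega
      rw [hV]
      push_cast
      ring

open Finset in
/-- Benjamin–Juhnke identity: `(n-1)^(n-1)` equals the sum, over tuples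
`(k_1, …, k_{n-2})` of nonnegative integers whose partial sums satisfy
`k_1 + ⋯ + k_j ≤ j`, of `(n-1)! / (k_1! ⋯ k_{n-2}!)`. -/
theorem stmt5 (n : ℕ) (hn : 2 ≤ n) :
    ((n - 1) ^ (n - 1) : ℚ) =
      ∑ k ∈ Finset.univ.filter (fun k : Fin (n - 2) → Fin n =>
          ∀ j : Fin (n - 2), (∑ i ∈ Finset.univ.filter (· ≤ j), (k i : ℕ)) ≤ j.val + 1),
        ((n - 1).factorial : ℚ) / ∏ j : Fin (n - 2), ((k j : ℕ).factorial : ℚ) := by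
  obtain ⟨t, rfl⟩ : ∃ t, n = t + 2 := ⟨n - 2, by omega⟩
  set x : ℚ := (t:ℚ) + 1 with hx
  have hx0 : x ≠ 0 := by positivity
  have key : ∑ k ∈ Finset.univ.filter (Cnd (t+2) t),
      (((t+1).factorial : ℚ) / ∏ j : Fin t, ((k j : ℕ).factorial : ℚ)) = x^(t+1) := by
    have hterm : ∀ k : Fin t → Fin (t+2),
        ((t+1).factorial : ℚ) / ∏ j, ((k j : ℕ).factorial : ℚ)
          = ((t+1).factorial : ℚ) * ∏ j, (1:ℚ)/((k j : ℕ).factorial : ℚ) := by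
      intro k
      rw [div_eq_mul_inv, ← Finset.prod_inv_distrib]
      simp [one_div]
    rw [Finset.sum_congr rfl (fun k _ => hterm k), ← Finset.mul_sum]
    have hpart : ∑ k ∈ Finset.univ.filter (Cnd (t+2) t), ∏ j, (1:ℚ)/((k j : ℕ).factorial : ℚ)
        = ∑ s ∈ Finset.range (t+1), V (t+2) t s := by
      rw [eq_comm]
      have hmaps : ∀ k ∈ Finset.univ.filter (Cnd (t+2) t),
          (∑ i, (k i : ℕ)) ∈ Finset.range (t+1) := by
        intro k hk
        have := total_le ((Finset.mem_filter.1 hk).2)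
        exact Finset.mem_range.2 (by omega)
      have hfib := Finset.sum_fiberwise_of_maps_to hmaps
        (fun k => ∏ j, (1:ℚ)/((k j : ℕ).factorial : ℚ))
      rw [← hfib]
      refine Finset.sum_congr rfl fun s _ => ?_
      rw [V]
      congr 1
      rw [Finset.filter_filter]
    rw [hpart]
    have hV : ∀ s ∈ Finset.range (t+1), V (t+2) t s = (x - s) * x^s / ((s.factorial : ℚ) * x) := by
      intro s hs
      have h1 := V_closed t (le_refl (t+2)) s (by have := Finset.mem_range.1 hs; omega)
      rw [← hx] at h1
      field_simp at h1 ⊢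
      linear_combination h1
    rw [Finset.sum_congr rfl hV]
    have htel := telescope x (t+1)
    have hstep : ∀ s ∈ Finset.range (t+1),
        (x - s) * x^s / ((s.factorial : ℚ) * x) = ((x - s) * x^s / (s.factorial : ℚ)) / x := by
      intro s _
      rw [div_div]
    rw [Finset.sum_congr rfl hstep, ← Finset.sum_div, htel]
    have hNf : (((t+1).factorial : ℕ) : ℚ) ≠ 0 := Nat.cast_ne_zero.2 (Nat.factorial_ne_zero _)
    have hcast : ((t+1 : ℕ) : ℚ) = x := by push_cast [hx]; ring
    rw [hcast]
    field_simp
  have hL : ((t + 2 : ℕ) : ℚ) - 1 = x := by push_cast [hx]; ring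
  show (((t + 2 : ℕ) : ℚ) - 1) ^ (t + 2 - 1) = _
  rw [hL, show t + 2 - 1 = t + 1 from rfl]
  exact key.symm
end

section
/- The number of tuples (k_1, ..., k_{n-2}) of nonnegative integers satisfying k_1 + ... + k_j ≤ j for all j = 1, ..., n-2 is the Catalan number C_{n-1} = (1/n)·C(2(n-1), n-1), for n ≥ 2. -/
/-!
Let `S(m, c)` be the number of sequences `k` of length `m` with `k_0 + ⋯ + k_j ≤ j + c` for all
`j`. Splitting off the first entry `a ≤ c` gives `S(m + 1, c) = ∑_{a ≤ c} S(m, c + 1 - a)`; in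
particular `S(m + 1, 0) = S(m, 1)` and `S(m + 1, c + 1) = S(m + 1, c) + S(m, c + 2)`. These are
also the recurrences of the ballot numbers `C(2m + c, m) - C(2m + c, m - 1)`, so Pascal's rule
identifies the two, and at `c = 0` the ballot number is `C(2m, m) - C(2m, m - 1) = catalan m`.
-/

open Finset

theorem Fin.sum_Iic_succ {M : Type*} [AddCommMonoid M] {m : ℕ} (f : Fin (m + 1) → M)
    (j : Fin m) : ∑ i ∈ Iic j.succ, f i = f 0 + ∑ i ∈ Iic j, f i.succ := by
  rw [← Icc_bot, bot_eq_zero, Icc_eq_cons_Ioc (Fin.zero_le _), Finset.sum_cons,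
    ← Fin.map_succEmb_Iic, sum_map]
  rfl

theorem catalan_succ_add_choose (m : ℕ) :
    catalan (m + 1) + (2 * m + 2).choose m = (2 * m + 2).choose (m + 1) := by
  have hcatalan : (m + 2) * catalan (m + 1) = (2 * m + 2).choose (m + 1) := by
    rw [succ_mul_catalan_eq_centralBinom, Nat.centralBinom]
    ring_nf
  have hchoose := Nat.choose_succ_right_eq (2 * m + 2) m
  rw [show 2 * m + 2 - m = m + 2 by omega] at hchoose
  nlinarith

def prefixBoundedSeqs (B m c : ℕ) : Finset (Fin m → Fin B) :=
  {k | ∀ j : Fin m, ∑ i ∈ Iic j, (k i : ℕ) ≤ j + c}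

def ballotCount : ℕ → ℕ → ℕ
  | 0, _ => 1
  | m + 1, c => ∑ a ∈ range (c + 1), ballotCount m (c + 1 - a)

theorem cons_mem_prefixBoundedSeqs_iff {B m c : ℕ} (a : Fin B) (k : Fin m → Fin B) :
    Fin.cons a k ∈ prefixBoundedSeqs B (m + 1) c ↔
      (a : ℕ) ≤ c ∧ k ∈ prefixBoundedSeqs B m (c + 1 - a) := by
  have hIic_zero : Iic (0 : Fin (m + 1)) = {0} := Iic_bot
  simp only [prefixBoundedSeqs, mem_filter, mem_univ, true_and, Fin.forall_fin_succ, hIic_zero,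
    sum_singleton, Fin.sum_Iic_succ, Fin.cons_zero, Fin.cons_succ, Fin.val_succ, Fin.val_zero,
    zero_add]
  refine and_congr_right fun ha => forall_congr' fun j => ?_
  omega

theorem card_prefixBoundedSeqs_succ {B m c : ℕ} (h : m + 1 + c ≤ B) :
    #(prefixBoundedSeqs B (m + 1) c) =
      ∑ a ∈ range (c + 1), #(prefixBoundedSeqs B m (c + 1 - a)) := by
  rw [← card_sigma]
  refine card_bij' (fun k _ => ⟨k 0, Fin.tail k⟩)
    (fun p hp => Fin.cons ⟨p.1, by simp only [mem_sigma, mem_range] at hp; omega⟩ p.2)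
    ?_ ?_ ?_ ?_
  · intro k hk
    rw [← Fin.cons_self_tail k, cons_mem_prefixBoundedSeqs_iff] at hk
    simpa [Nat.lt_succ_iff] using hk
  · rintro ⟨a, k⟩ hp
    simp only [mem_sigma, mem_range] at hp
    exact (cons_mem_prefixBoundedSeqs_iff _ _).2 ⟨by simpa using Nat.lt_succ_iff.1 hp.1, hp.2⟩
  · intro k _
    exact Fin.cons_self_tail k
  · rintro ⟨a, k⟩ _
    simp

theorem card_prefixBoundedSeqs {B m c : ℕ} (h : m + c ≤ B) :
    #(prefixBoundedSeqs B m c) = ballotCount m c := by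
  induction m generalizing c with
  | zero => simp [prefixBoundedSeqs, ballotCount]
  | succ m ih =>
    rw [card_prefixBoundedSeqs_succ h, ballotCount]
    refine sum_congr rfl fun a ha => ih ?_
    rw [mem_range] at ha
    omega

theorem ballotCount_succ_zero (m : ℕ) : ballotCount (m + 1) 0 = ballotCount m 1 := by
  simp [ballotCount]

theorem ballotCount_succ_succ (m c : ℕ) :
    ballotCount (m + 1) (c + 1) = ballotCount (m + 1) c + ballotCount m (c + 2) := by
  rw [ballotCount, sum_range_succ', ballotCount]
  simp only [Nat.add_sub_add_right, Nat.sub_zero]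

theorem ballotCount_one (c : ℕ) : ballotCount 1 c = c + 1 := by
  simp [ballotCount]

-- The ballot formula, shifted to `m + 1` and written additively to avoid truncated subtraction.
theorem ballotCount_add_choose (m c : ℕ) :
    ballotCount (m + 1) c + (2 * m + c + 2).choose m = (2 * m + c + 2).choose (m + 1) := by
  induction m generalizing c with
  | zero => simp [ballotCount_one]
  | succ m ih =>
    induction c with
    | zero =>
      have h := ih 1
      have hsymm := Nat.choose_symm_half (m + 1)
      have hpascal₁ := Nat.choose_succ_succ' (2 * m + 3) m
      have hpascal₂ := Nat.choose_succ_succ' (2 * m + 3) (m + 1)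
      rw [ballotCount_succ_zero, show 2 * (m + 1) + 0 + 2 = 2 * m + 3 + 1 by ring]
      rw [show 2 * m + 1 + 2 = 2 * m + 3 by ring] at h
      rw [show 2 * (m + 1) + 1 = 2 * m + 3 by ring] at hsymm
      omega
    | succ c ihc =>
      have h := ih (c + 2)
      have hpascal₁ := Nat.choose_succ_succ' (2 * m + c + 4) m
      have hpascal₂ := Nat.choose_succ_succ' (2 * m + c + 4) (m + 1)
      rw [ballotCount_succ_succ, show 2 * (m + 1) + (c + 1) + 2 = 2 * m + c + 4 + 1 by ring]
      rw [show 2 * (m + 1) + c + 2 = 2 * m + c + 4 by ring] at ihc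
      rw [show 2 * m + (c + 2) + 2 = 2 * m + c + 4 by ring] at h
      omega

theorem ballotCount_zero_right (m : ℕ) : ballotCount m 0 = catalan m := by
  cases m with
  | zero => simp [ballotCount]
  | succ m =>
    have h := ballotCount_add_choose m 0
    rw [add_zero, ← catalan_succ_add_choose] at h
    exact Nat.add_right_cancel h

open Finset in
/-- The number of tuples `(k_1, …, k_{n-2})` of nonnegative integers with all partial
sums `k_1 + ⋯ + k_j ≤ j` is the Catalan number `C_{n-1} = C(2(n-1), n-1)/n`. -/
theorem stmt6 (n : ℕ) (hn : 2 ≤ n) :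
    (Finset.univ.filter (fun k : Fin (n - 2) → Fin n =>
        ∀ j : Fin (n - 2), (∑ i ∈ Finset.univ.filter (· ≤ j), (k i : ℕ)) ≤ j.val + 1)).card =
      catalan (n - 1) ∧
    catalan (n - 1) = Nat.choose (2 * (n - 1)) (n - 1) / n := by
  have hn' : n - 2 + 1 = n - 1 := by omega
  constructor
  · simp only [filter_ge_eq_Iic]
    change #(prefixBoundedSeqs n (n - 2) 1) = _
    rw [card_prefixBoundedSeqs (by omega), ← ballotCount_succ_zero, hn', ballotCount_zero_right]
  · rw [catalan_eq_centralBinom_div, Nat.centralBinom, show n - 1 + 1 = n by omega]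
end

section
/- Define F(n,s) recursively by F(1,1) = 1, F(n,0) = 0 for n ≥ 1, and F(n,s) = Σ_{j=0}^{n-s} C(n-s, j)·F(n-1, s+j-1) for 1 ≤ s ≤ n. Then F(n,s) = s·n^(n-s-1) for all 1 ≤ s ≤ n. -/
/-!
Induction on `n`. Substituting the closed form for `F(n-1, ·)` into the recursion and writing
`x = n - 1`, `m = n - s`, the right-hand side becomes `x⁻¹ Σ_j C(m,j) (s-1+j) x^(m-j)`. The binomial
theorem and its derivative evaluate the sum as `(s-1)(x+1)^m + m(x+1)^(m-1)`, which equals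
`s x n^(m-1)` because `s + m = x + 1`.
-/

open Finset

section BinomialSums

variable {R : Type*} [CommSemiring R]

theorem sum_range_choose_mul_pow (x : R) (m : ℕ) :
    ∑ j ∈ range (m + 1), (m.choose j : R) * x ^ (m - j) = (x + 1) ^ m := by
  rw [add_comm x 1, add_pow]
  exact sum_congr rfl fun j _ => by ring

theorem add_one_mul_sum_range_choose_mul_mul_pow (x : R) (m : ℕ) :
    (x + 1) * ∑ j ∈ range (m + 1), (m.choose j : R) * j * x ^ (m - j) = m * (x + 1) ^ m := by
  cases m with
  | zero => simp
  | succ k =>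
    have hterm : ∀ j ∈ range (k + 1),
        ((k + 1).choose (j + 1) : R) * ((j + 1 : ℕ) : R) * x ^ (k + 1 - (j + 1))
          = (k + 1 : R) * ((k.choose j : R) * x ^ (k - j)) := by
      intro j _
      rw [← Nat.cast_mul, ← Nat.add_one_mul_choose_eq, Nat.add_sub_add_right]
      push_cast
      ring
    rw [sum_range_succ', sum_congr rfl hterm, ← mul_sum, sum_range_choose_mul_pow]
    push_cast
    ring

theorem add_one_mul_sum_range_choose_mul_add_mul_pow (a x : R) (m : ℕ) :
    (x + 1) * ∑ j ∈ range (m + 1), (m.choose j : R) * (a + j) * x ^ (m - j)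
      = (a * (x + 1) + m) * (x + 1) ^ m := by
  have hsplit : ∑ j ∈ range (m + 1), (m.choose j : R) * (a + j) * x ^ (m - j)
      = a * ∑ j ∈ range (m + 1), (m.choose j : R) * x ^ (m - j)
        + ∑ j ∈ range (m + 1), (m.choose j : R) * j * x ^ (m - j) := by
    rw [mul_sum, ← sum_add_distrib]
    exact sum_congr rfl fun j _ => by ring
  rw [hsplit, mul_add, add_one_mul_sum_range_choose_mul_mul_pow, sum_range_choose_mul_pow]
  ring

end BinomialSums

/-- Cayley's count `s n^(n-s-1)` of rooted forests on `n` labelled vertices whose roots are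
`s` given vertices. -/
def forestCount (n s : ℕ) : ℚ := (s : ℚ) * (n : ℚ) ^ ((n : ℤ) - (s : ℤ) - 1)

@[simp] theorem forestCount_zero_right (n : ℕ) : forestCount n 0 = 0 := by
  simp [forestCount]

theorem forestCount_succ {n s : ℕ} (hn : 1 ≤ n) (hs : 1 ≤ s) (hsn : s ≤ n + 1) :
    forestCount (n + 1) s = ∑ j ∈ range (n + 1 - s + 1),
      ((n + 1 - s).choose j : ℚ) * forestCount n (s + j - 1) := by
  set m := n + 1 - s
  have hn0 : (n : ℚ) ≠ 0 := by positivity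
  have hsm : (s : ℚ) + m = n + 1 := by exact_mod_cast (show s + m = n + 1 by omega)
  have hterm : ∀ j ∈ range (m + 1), (m.choose j : ℚ) * forestCount n (s + j - 1)
      = (m.choose j : ℚ) * ((s - 1 : ℚ) + j) * (n : ℚ) ^ (m - j) * (n : ℚ)⁻¹ := by
    intro j hj
    have hjm : j ≤ m := Nat.lt_succ_iff.mp (mem_range.mp hj)
    have hexp : (n : ℤ) - ((s + j - 1 : ℕ) : ℤ) - 1 = ((m - j : ℕ) : ℤ) - 1 := by omega
    rw [forestCount, hexp, zpow_sub_one₀ hn0, zpow_natCast, Nat.cast_sub (by omega)]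
    push_cast
    ring
  have hsum := add_one_mul_sum_range_choose_mul_add_mul_pow ((s : ℚ) - 1) (n : ℚ) m
  have hexp : ((n + 1 : ℕ) : ℤ) - s - 1 = (m : ℤ) - 1 := by omega
  rw [sum_congr rfl hterm, ← sum_mul, forestCount, hexp, zpow_sub_one₀ (by positivity), zpow_natCast]
  field_simp
  push_cast
  linear_combination -hsum - ((n : ℚ) + 1) ^ m * hsm

/-- If `F` satisfies `F(1,1) = 1`, `F(n,0) = 0` for `n ≥ 1`, and the recursion
`F(n,s) = Σ_{j=0}^{n-s} C(n-s,j) F(n-1, s+j-1)` for `1 ≤ s ≤ n`, then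
`F(n,s) = s·n^(n-s-1)` for all `1 ≤ s ≤ n` (interpreted in `ℚ`). -/
theorem stmt7 (F : ℕ → ℕ → ℚ)
    (h1 : F 1 1 = 1)
    (h0 : ∀ n : ℕ, 1 ≤ n → F n 0 = 0)
    (hrec : ∀ n s : ℕ, 1 ≤ s → s ≤ n →
      F n s = ∑ j ∈ Finset.range (n - s + 1), (Nat.choose (n - s) j : ℚ) * F (n - 1) (s + j - 1)) :
    ∀ n s : ℕ, 1 ≤ s → s ≤ n →
      F n s = (s : ℚ) * (n : ℚ) ^ ((n : ℤ) - (s : ℤ) - 1) := by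
  intro n
  induction n with
  | zero => intro s hs hsn; omega
  | succ n ih =>
    intro s hs hsn
    obtain rfl | hn := Nat.eq_zero_or_pos n
    · obtain rfl : s = 1 := by omega
      simpa using h1
    have hFn : ∀ t ≤ n, F n t = forestCount n t := by
      intro t ht
      obtain rfl | ht0 := Nat.eq_zero_or_pos t
      · simpa using h0 n hn
      · exact ih t ht0 ht
    change _ = forestCount (n + 1) s
    rw [hrec _ _ hs hsn, forestCount_succ hn hs hsn, add_tsub_cancel_right]
    refine sum_congr rfl fun j hj => ?_
    rw [hFn _ (by have := mem_range.mp hj; omega)]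
end

section
/- For every integer n ≥ 1, n^n = Σ_{s=1}^{n} C(n+1, s+1) · s · n^(n-s-1), where the s = n term is interpreted as C(n+1, n+1)·n·n^(-1) = 1. -/
open Finset

lemma binsum (m : ℕ) (x : ℚ) :
    ∑ k ∈ range (m+1), (m.choose k : ℚ) * x ^ (m - k) = (1 + x) ^ m := by
  rw [add_pow]
  exact Finset.sum_congr rfl (fun k _ => by ring)

lemma key (n : ℕ) :
    ∑ s ∈ Finset.Icc 1 n, ((n+1).choose (s+1) : ℚ) * s * (n:ℚ) ^ (n - s)
      = (n:ℚ) ^ (n + 1) := by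
  have hS : ∑ k ∈ range (n+2), ((n+1).choose k : ℚ) * k * (n:ℚ) ^ (n+1-k)
      = (1 + (n:ℚ)) ^ (n+1) := by
    rw [Finset.sum_range_succ']
    simp only [Nat.cast_zero, mul_zero, zero_mul, add_zero]
    have : ∀ j ∈ range (n+1),
        ((n+1).choose (j+1) : ℚ) * ((j+1 : ℕ) : ℚ) * (n:ℚ) ^ (n+1-(j+1))
          = (1 + (n:ℚ)) * ((n.choose j : ℚ) * (n:ℚ) ^ (n-j)) := by
      intro j _
      have h' : ((n:ℚ) + 1) * (n.choose j : ℚ)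
          = ((n+1).choose (j+1) : ℚ) * ((j:ℚ) + 1) := by
        exact_mod_cast congrArg (Nat.cast : ℕ → ℚ) (Nat.add_one_mul_choose_eq n j)
      have hexp : n + 1 - (j + 1) = n - j := by omega
      rw [hexp]
      push_cast
      linear_combination (-((n:ℚ) ^ (n - j))) * h'
    rw [Finset.sum_congr rfl this, ← Finset.mul_sum, binsum n (n:ℚ), pow_succ]
    ring
  have hB : ∑ k ∈ range (n+2), ((n+1).choose k : ℚ) * (n:ℚ) ^ (n+1-k)
      = (1 + (n:ℚ)) ^ (n+1) := binsum (n+1) (n:ℚ)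
  have split : ∀ F : ℕ → ℚ, ∑ k ∈ range (n+2), F k
      = F 0 + F 1 + ∑ i ∈ range n, F (i + 1 + 1) := by
    intro F
    rw [Finset.sum_range_succ', Finset.sum_range_succ']
    ring
  rw [split] at hS hB
  simp only [Nat.choose_zero_right, Nat.choose_one_right, Nat.cast_zero, Nat.cast_one,
    Nat.sub_zero, Nat.add_sub_cancel, mul_zero, zero_mul, mul_one, one_mul, zero_add] at hS hB
  have htgt : ∑ s ∈ Finset.Icc 1 n, ((n+1).choose (s+1) : ℚ) * s * (n:ℚ) ^ (n - s)
      = (∑ i ∈ range n, ((n+1).choose (i+1+1) : ℚ) * ((i+1+1 : ℕ) : ℚ) * (n:ℚ) ^ (n+1-(i+1+1)))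
        - (∑ i ∈ range n, ((n+1).choose (i+1+1) : ℚ) * (n:ℚ) ^ (n+1-(i+1+1))) := by
    rw [← Finset.sum_sub_distrib]
    rw [show Finset.Icc 1 n = Finset.Ico 1 (n+1) by rw [Finset.Ico_add_one_right_eq_Icc]]
    rw [Finset.sum_Ico_eq_sum_range]
    apply Finset.sum_congr (by congr 1)
    intro i hi
    have hexp : n + 1 - (i + 1 + 1) = n - (1 + i) := by omega
    have hch : i + 1 + 1 = 1 + i + 1 := by omega
    rw [hexp, hch]
    push_cast
    ring
  rw [htgt]
  push_cast at hS hB ⊢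
  linarith
/-- `n^n = Σ_{s=1}^{n} C(n+1, s+1)·s·n^(n-s-1)`, where the `s = n` term is
interpreted (in `ℚ`) as `C(n+1,n+1)·n·n^(-1) = 1`. -/
theorem stmt8 (n : ℕ) (hn : 1 ≤ n) :
    ((n : ℚ) ^ n) =
      ∑ s ∈ Finset.Icc 1 n,
        (Nat.choose (n + 1) (s + 1) : ℚ) * (s : ℚ) * (n : ℚ) ^ ((n : ℤ) - (s : ℤ) - 1) := by
  have hn0 : (n : ℚ) ≠ 0 := Nat.cast_ne_zero.mpr (by omega)
  apply mul_left_cancel₀ hn0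
  have h2 : ∀ s ∈ Finset.Icc 1 n,
      (n:ℚ) * (((n+1).choose (s+1) : ℚ) * s * (n:ℚ) ^ ((n:ℤ) - s - 1))
        = ((n+1).choose (s+1) : ℚ) * s * (n:ℚ) ^ (n - s) := by
    intro s hs
    rw [Finset.mem_Icc] at hs
    have hp : (n:ℚ) ^ ((n:ℤ) - s - 1) * (n:ℚ) = (n:ℚ) ^ (n - s) := by
      rw [← zpow_natCast (n:ℚ) (n - s), ← zpow_add_one₀ hn0]
      congr 1
      push_cast [Nat.cast_sub hs.2]
      ring
    linear_combination (((n+1).choose (s+1) : ℚ) * s) * hp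
  rw [Finset.mul_sum, Finset.sum_congr rfl h2, key n, pow_succ]
  ring
end

section
/- For n ≥ 1, the number of rooted labeled trees on vertex set [n] in which the root is larger than all of its children (immediate descendants) is (n-1)^(n-1). -/
/-!
A rooted tree on a finite vertex type is encoded by its parent map `p`, which fixes the root `r`
and eventually sends every vertex to `r`; the children of the root are the vertices `v ≠ r` with
`p v = r`. Deleting the roots of a rooted forest with root set `S` leaves a rooted forest on the
complement whose roots are the children of `S`, and these children may be attached to `S`
arbitrarily; the resulting recursion gives the count `k m^(m-k-1)` of rooted forests on `m`
vertices with a prescribed set of `k` roots. An uprooted tree on `Fin (t + 1)` with root `a` is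
such a forest on the other `t` vertices with all roots below `a`, so there are
`∑ⱼ C(a,j) j t^(t-j-1) = a t^(t-a-1) (t+1)^(a-1)` of them, and an Abel-type identity sums these
over `a` to `t^t`.
-/

open Finset Function

theorem sum_range_mul_choose_mul_pow_mul_pow {R : Type*} [CommSemiring R] (a : ℕ) (x y : R) :
    ∑ j ∈ range (a + 1), (j * a.choose j : R) * x ^ j * y ^ (a - j) =
      a * x * (x + y) ^ (a - 1) := by
  cases a with
  | zero => simp
  | succ b =>
    rw [sum_range_succ', add_pow, mul_sum]
    simp only [Nat.cast_zero, zero_mul, add_zero, Nat.add_sub_cancel, Nat.add_sub_add_right]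
    refine sum_congr rfl fun j _ => ?_
    have h := congrArg (Nat.cast : ℕ → R) (Nat.add_one_mul_choose_eq b j)
    push_cast at h ⊢
    calc ((j : R) + 1) * ((b + 1).choose (j + 1) : ℕ) * x ^ (j + 1) * y ^ (b - j)
        = ((b + 1).choose (j + 1) * (j + 1) : R) * (x * (x ^ j * y ^ (b - j))) := by ring
      _ = ((b + 1) * b.choose j : R) * (x * (x ^ j * y ^ (b - j))) := by rw [h]
      _ = _ := by ring

theorem sum_range_mul_pow_mul_add_one_pow {R : Type*} [CommRing R] (x : R) (u : ℕ) :
    ∑ a ∈ range (u + 1), (a : R) * x ^ (u - a) * (x + 1) ^ (a - 1) + (x - u) * (x + 1) ^ u =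
      x ^ (u + 1) := by
  induction u with
  | zero => simp
  | succ u ih =>
    have hshift : ∑ a ∈ range (u + 1), (a : R) * x ^ (u + 1 - a) * (x + 1) ^ (a - 1) =
        x * ∑ a ∈ range (u + 1), (a : R) * x ^ (u - a) * (x + 1) ^ (a - 1) := by
      rw [mul_sum]
      refine sum_congr rfl fun a ha => ?_
      rw [Nat.sub_add_comm (mem_range_succ_iff.mp ha), pow_succ]
      ring
    rw [sum_range_succ, hshift, Nat.sub_self, Nat.add_sub_cancel]
    push_cast
    linear_combination x * ih

theorem sum_range_choose_mul_mul_pow_sub {a t : ℕ} (hat : a ≤ t) :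
    ∑ j ∈ range (a + 1), a.choose j • (j * t ^ (t - j)) =
      a * t ^ (t - a) * (t + 1) ^ (a - 1) := by
  have hbinom : ∑ j ∈ range (a + 1), j * a.choose j * 1 ^ j * t ^ (a - j) =
      a * 1 * (1 + t) ^ (a - 1) := by
    exact_mod_cast sum_range_mul_choose_mul_pow_mul_pow a (1 : ℕ) t
  calc ∑ j ∈ range (a + 1), a.choose j • (j * t ^ (t - j))
      = (∑ j ∈ range (a + 1), j * a.choose j * 1 ^ j * t ^ (a - j)) * t ^ (t - a) := by
        rw [sum_mul]
        refine sum_congr rfl fun j hj => ?_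
        have hja := mem_range_succ_iff.mp hj
        rw [smul_eq_mul, one_pow, mul_one, mul_assoc _ (t ^ (a - j)), ← pow_add,
          show a - j + (t - a) = t - j by omega]
        ring
    _ = _ := by
        rw [hbinom, add_comm 1 t]
        ring

section RootedForest

variable {W : Type*}

def IsRootedForest (S : Finset W) (p : W → W) : Prop :=
  (∀ s ∈ S, p s = s) ∧ ∀ v, ∃ k, p^[k] v ∈ S

theorem card_rootedForest_empty [Nonempty W] : Nat.card {p : W → W // IsRootedForest ∅ p} = 0 :=
  have : IsEmpty {p : W → W // IsRootedForest ∅ p} :=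
    ⟨fun p => by simpa using p.2.2 (Classical.arbitrary W)⟩
  Nat.card_of_isEmpty

theorem card_rootedForest_univ [Fintype W] : Nat.card {p : W → W // IsRootedForest univ p} = 1 :=
  Nat.card_eq_one_iff_unique.mpr
    ⟨⟨fun p q => Subtype.ext <| funext fun x =>
        (p.2.1 x (mem_univ x)).trans (q.2.1 x (mem_univ x)).symm⟩,
      ⟨⟨id, fun _ _ => rfl, fun v => ⟨0, mem_univ v⟩⟩⟩⟩

variable [DecidableEq W] {S : Finset W}

def deleteRoots (S : Finset W) (p : W → W) (x : {x // x ∉ S}) : {x // x ∉ S} :=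
  if h : p x ∈ S then x else ⟨p x, h⟩

def graft {J : Finset {x // x ∉ S}} (f : J → S) (q : {x // x ∉ S} → {x // x ∉ S})
    (x : W) : W :=
  if hx : x ∈ S then x
  else if hJ : ⟨x, hx⟩ ∈ J then f ⟨⟨x, hx⟩, hJ⟩
  else q ⟨x, hx⟩

theorem isRootedForest_graft {J : Finset {x // x ∉ S}} (f : J → S)
    {q : {x // x ∉ S} → {x // x ∉ S}} (hq : IsRootedForest J q) :
    IsRootedForest S (graft f q) := by
  refine ⟨fun s hs => dif_pos hs, fun x => ?_⟩
  by_cases hxS : x ∈ S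
  · exact ⟨0, hxS⟩
  obtain ⟨k, hk⟩ := hq.2 ⟨x, hxS⟩
  induction k generalizing x with
  | zero => exact ⟨1, by simp [graft, hxS, show ⟨x, hxS⟩ ∈ J from hk]⟩
  | succ k ih =>
    by_cases hxJ : ⟨x, hxS⟩ ∈ J
    · exact ⟨1, by simp [graft, hxS, hxJ]⟩
    · obtain ⟨j, hj⟩ := ih (q ⟨x, hxS⟩) (q ⟨x, hxS⟩).2 hk
      exact ⟨j + 1, by rwa [iterate_succ_apply, graft, dif_neg hxS, dif_neg hxJ]⟩

variable [Fintype W]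

def rootChildren (S : Finset W) (p : W → W) : Finset {x // x ∉ S} := {x | p x ∈ S}

theorem isRootedForest_deleteRoots {p : W → W} (hp : IsRootedForest S p) :
    IsRootedForest (rootChildren S p) (deleteRoots S p) := by
  refine ⟨fun x hx => dif_pos (by simpa [rootChildren] using hx), fun x => ?_⟩
  obtain ⟨k, hk⟩ := hp.2 x
  induction k generalizing x with
  | zero => exact absurd hk x.2
  | succ k ih =>
    by_cases hx : p x ∈ S
    · exact ⟨0, by simpa [rootChildren] using hx⟩
    · obtain ⟨j, hj⟩ := ih ⟨p x, hx⟩ hk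
      exact ⟨j + 1, by rwa [iterate_succ_apply, deleteRoots, dif_neg hx]⟩

theorem rootChildren_graft {J : Finset {x // x ∉ S}} (f : J → S)
    (q : {x // x ∉ S} → {x // x ∉ S}) : rootChildren S (graft f q) = J := by
  ext x
  by_cases hxJ : x ∈ J <;> simp [rootChildren, graft, x.2, hxJ, (q x).2]

def rootChildrenFiberEquiv (J : Finset {x // x ∉ S}) :
    {p : W → W // IsRootedForest S p ∧ rootChildren S p = J} ≃
      (J → S) × {q : {x // x ∉ S} → {x // x ∉ S} // IsRootedForest J q} where
  toFun p := (fun j => ⟨p.1 j, by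
      obtain ⟨p, -, rfl⟩ := p
      simpa [rootChildren] using j.2⟩,
    ⟨deleteRoots S p, by obtain ⟨p, hp, rfl⟩ := p; exact isRootedForest_deleteRoots hp⟩)
  invFun fq := ⟨graft fq.1 fq.2, isRootedForest_graft fq.1 fq.2.2, rootChildren_graft _ _⟩
  left_inv := by
    rintro ⟨p, hp, rfl⟩
    ext x
    by_cases hxS : x ∈ S
    · simp [graft, hxS, hp.1 x hxS]
    by_cases hxJ : p x ∈ S
    · simp [graft, hxS, rootChildren, hxJ]
    · simp [graft, hxS, rootChildren, hxJ, deleteRoots]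
  right_inv := by
    rintro ⟨f, q, hq⟩
    ext x
    · simp [graft, x.1.2]
    · by_cases hxJ : x ∈ J
      · simp [deleteRoots, graft, x.2, hxJ, hq.1 x hxJ]
      · simp [deleteRoots, graft, x.2, hxJ, (q x).2]

theorem card_rootedForest_rootChildren_mem (𝒥 : Finset (Finset {x // x ∉ S})) :
    Nat.card {p : W → W // IsRootedForest S p ∧ rootChildren S p ∈ 𝒥} =
      ∑ J ∈ 𝒥, #S ^ #J *
        Nat.card {q : {x // x ∉ S} → {x // x ∉ S} // IsRootedForest J q} := by
  let e : {p : W → W // IsRootedForest S p ∧ rootChildren S p ∈ 𝒥} ≃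
      Σ J : 𝒥, {p : W → W // IsRootedForest S p ∧ rootChildren S p = J} :=
    { toFun := fun p => ⟨⟨_, p.2.2⟩, p.1, p.2.1, rfl⟩
      invFun := fun p => ⟨p.2.1, p.2.2.1, by rw [p.2.2.2]; exact p.1.2⟩
      left_inv := fun _ => rfl
      right_inv := fun ⟨⟨_, _⟩, _, _, hpJ⟩ => by cases hpJ; rfl }
  rw [Nat.card_congr e, Nat.card_sigma, ← sum_coe_sort 𝒥]
  refine sum_congr rfl fun J _ => ?_
  rw [Nat.card_congr (rootChildrenFiberEquiv (S := S) J.1), Nat.card_prod, Nat.card_fun]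
  simp

theorem card_rootedForest_eq_sum (S : Finset W) :
    Nat.card {p : W → W // IsRootedForest S p} =
      ∑ J, #S ^ #J * Nat.card {q : {x // x ∉ S} → {x // x ∉ S} // IsRootedForest J q} := by
  rw [← card_rootedForest_rootChildren_mem]
  exact Nat.card_congr (Equiv.subtypeEquivRight fun p => by simp)

-- The count `k m^(m-k-1)`, multiplied by `m` so that `S = univ` needs no negative exponent.
theorem card_rootedForest_mul_card (S : Finset W) :
    Nat.card {p : W → W // IsRootedForest S p} * Fintype.card W =
      #S * Fintype.card W ^ (Fintype.card W - #S) := by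
  induction hm : Fintype.card W using Nat.strong_induction_on generalizing W with
  | _ m ih =>
  rcases S.eq_empty_or_nonempty with rfl | hS
  · cases isEmpty_or_nonempty W
    · simp [← hm]
    · simp [card_rootedForest_empty]
  have hMm : Fintype.card {x // x ∉ S} + #S = m := by
    rw [← hm, Fintype.card_subtype_compl, Fintype.card_coe, Nat.sub_add_cancel (card_le_univ S)]
  set M := Fintype.card {x // x ∉ S}
  have hS1 := hS.card_pos
  rcases Nat.eq_zero_or_pos M with hM0 | hMpos
  · obtain rfl : S = univ := eq_univ_of_forall fun x => by
      by_contra hx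
      exact (Fintype.card_pos_iff.mpr ⟨⟨x, hx⟩⟩).ne' hM0
    simp [card_rootedForest_univ, ← hm]
  have hsum : Nat.card {p : W → W // IsRootedForest S p} * M = M * #S * m ^ (M - 1) := by
    rw [card_rootedForest_eq_sum, sum_mul, ← powerset_univ]
    calc ∑ J ∈ univ.powerset, #S ^ #J * Nat.card {q // IsRootedForest J q} * M
        = ∑ J ∈ univ.powerset, #S ^ #J * (#J * M ^ (M - #J)) :=
          sum_congr rfl fun J _ => by rw [mul_assoc, ih M (by omega) J rfl]
      _ = ∑ j ∈ range (M + 1), (j * M.choose j) * #S ^ j * M ^ (M - j) := by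
          rw [sum_powerset_apply_card (fun j => #S ^ j * (j * M ^ (M - j))), card_univ]
          exact sum_congr rfl fun j _ => by rw [smul_eq_mul]; ring
      _ = M * #S * m ^ (M - 1) := by
          rw [← hMm, add_comm M #S]
          exact_mod_cast sum_range_mul_choose_mul_pow_mul_pow M #S M
  have hF : Nat.card {p : W → W // IsRootedForest S p} = #S * m ^ (M - 1) :=
    Nat.eq_of_mul_eq_mul_right hMpos (by rw [hsum]; ring)
  rw [hF, show m - #S = M - 1 + 1 by omega, pow_succ]
  ring

end RootedForest

section ParentGraph

variable {V : Type*} {p : V → V} {r v w : V}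

def parentGraph (p : V → V) : SimpleGraph V := SimpleGraph.fromRel fun a b => p a = b

theorem parentGraph_adj : (parentGraph p).Adj v w ↔ v ≠ w ∧ (p v = w ∨ p w = v) :=
  SimpleGraph.fromRel_adj ..

open Classical in
noncomputable def parentToward (g : SimpleGraph V) (r v : V) : V :=
  if h : ∃ w, g.Adj v w ∧ g.dist w r + 1 = g.dist v r then h.choose else v

theorem SimpleGraph.Connected.exists_adj_dist_add_one_eq {g : SimpleGraph V} (hg : g.Connected)
    (hv : v ≠ r) : ∃ w, g.Adj v w ∧ g.dist w r + 1 = g.dist v r := by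
  obtain ⟨q, hq⟩ := hg.exists_walk_length_eq_dist v r
  cases q with
  | nil => exact absurd rfl hv
  | @cons _ w _ hvw q =>
    obtain ⟨q', hq'⟩ := hg.exists_walk_length_eq_dist w r
    have h₁ := g.dist_le q
    have h₂ := g.dist_le (q'.cons hvw)
    simp only [SimpleGraph.Walk.length_cons] at hq h₂
    exact ⟨w, hvw, by omega⟩

theorem parentToward_self (g : SimpleGraph V) (r : V) : parentToward g r r = r := by
  simp [parentToward]

theorem SimpleGraph.Connected.parentToward_spec {g : SimpleGraph V} (hg : g.Connected)
    (hv : v ≠ r) :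
    g.Adj v (parentToward g r v) ∧ g.dist (parentToward g r v) r + 1 = g.dist v r := by
  rw [parentToward, dif_pos (hg.exists_adj_dist_add_one_eq hv)]
  exact (hg.exists_adj_dist_add_one_eq hv).choose_spec

theorem SimpleGraph.Connected.isRootedForest_parentToward {g : SimpleGraph V}
    (hg : g.Connected) : IsRootedForest {r} (parentToward g r) := by
  refine ⟨fun s hs => by rw [mem_singleton.mp hs, parentToward_self], fun v => ?_⟩
  induction hd : g.dist v r using Nat.strong_induction_on generalizing v with
  | _ d ih =>
  by_cases hv : v = r
  · exact ⟨0, by simp [hv]⟩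
  have hspec := hg.parentToward_spec hv
  obtain ⟨k, hk⟩ := ih _ (by omega) (parentToward g r v) rfl
  exact ⟨k + 1, by rwa [iterate_succ_apply]⟩

theorem SimpleGraph.Connected.parentGraph_parentToward_le {g : SimpleGraph V}
    (hg : g.Connected) : parentGraph (parentToward g r) ≤ g := by
  have hadj : ∀ v w, v ≠ w → parentToward g r v = w → g.Adj v w := by
    rintro v w hvw rfl
    by_cases hv : v = r
    · exact absurd (by rw [hv, parentToward_self]) hvw
    · exact (hg.parentToward_spec hv).1
  intro v w hvw
  obtain ⟨hne, h | h⟩ := parentGraph_adj.mp hvw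
  · exact hadj v w hne h
  · exact (hadj w v hne.symm h).symm

namespace IsRootedForest

theorem apply_root (hp : IsRootedForest {r} p) : p r = r := hp.1 r (mem_singleton_self r)

theorem exists_iterate_eq (hp : IsRootedForest {r} p) (v : V) : ∃ k, p^[k] v = r := by
  simpa using hp.2 v

theorem apply_ne_self (hp : IsRootedForest {r} p) (hv : v ≠ r) : p v ≠ v := fun h => by
  obtain ⟨k, hk⟩ := hp.exists_iterate_eq v
  exact hv (by rwa [iterate_fixed h] at hk)

theorem adj_apply (hp : IsRootedForest {r} p) (hv : v ≠ r) : (parentGraph p).Adj v (p v) :=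
  parentGraph_adj.mpr ⟨(hp.apply_ne_self hv).symm, Or.inl rfl⟩

theorem eq_apply_or_of_adj (hp : IsRootedForest {r} p) (h : (parentGraph p).Adj v w) :
    p v = w ∨ w ≠ r ∧ p w = v := by
  obtain ⟨hne, h | h⟩ := parentGraph_adj.mp h
  · exact Or.inl h
  · refine Or.inr ⟨fun hw => hne ?_, h⟩
    rw [← h, hw, hp.apply_root]

theorem parentGraph_adj_root (hp : IsRootedForest {r} p) :
    (parentGraph p).Adj r v ↔ v ≠ r ∧ p v = r := by
  refine ⟨fun h => ?_, fun ⟨hv, hpv⟩ => (hpv ▸ hp.adj_apply hv).symm⟩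
  rcases hp.eq_apply_or_of_adj h with h' | h'
  · exact absurd (h'.symm.trans hp.apply_root) (parentGraph_adj.mp h).1.symm
  · exact h'

theorem reachable (hp : IsRootedForest {r} p) (v : V) : (parentGraph p).Reachable v r := by
  obtain ⟨k, hk⟩ := hp.exists_iterate_eq v
  induction k generalizing v with
  | zero => exact hk ▸ .rfl
  | succ k ih =>
    by_cases hv : v = r
    · exact hv ▸ .rfl
    · exact (hp.adj_apply hv).reachable.trans (ih (p v) hk)

theorem connected_parentGraph (hp : IsRootedForest {r} p) : (parentGraph p).Connected :=
  (SimpleGraph.connected_iff_exists_forall_reachable _).mpr ⟨r, fun v => (hp.reachable v).symm⟩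

-- A neighbour `w` of `v` closer to `r` is `p v` or a child of `v`; the latter contradicts the
-- claim for `w`, which is closer to `r`.
theorem dist_apply_add_one (hp : IsRootedForest {r} p) (hv : v ≠ r) :
    (parentGraph p).dist (p v) r + 1 = (parentGraph p).dist v r := by
  induction hd : (parentGraph p).dist v r using Nat.strong_induction_on generalizing v with
  | _ d ih =>
  obtain ⟨w, hvw, hw⟩ := hp.connected_parentGraph.exists_adj_dist_add_one_eq hv
  rcases hp.eq_apply_or_of_adj hvw with rfl | ⟨hwr, rfl⟩
  · exact hw.trans hd
  · have := ih _ (by omega) hwr rfl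
    omega

theorem apply_eq_of_adj (hp : IsRootedForest {r} p) (h : (parentGraph p).Adj v w)
    (hw : (parentGraph p).dist w r + 1 = (parentGraph p).dist v r) : p v = w := by
  rcases hp.eq_apply_or_of_adj h with h | ⟨hwr, rfl⟩
  · exact h
  · have := hp.dist_apply_add_one hwr
    omega

theorem parentToward_parentGraph (hp : IsRootedForest {r} p) :
    parentToward (parentGraph p) r = p := by
  funext v
  by_cases hv : v = r
  · rw [hv, parentToward_self, hp.apply_root]
  · obtain ⟨hadj, hdist⟩ := hp.connected_parentGraph.parentToward_spec hv
    exact (hp.apply_eq_of_adj hadj hdist).symm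

theorem edgeSet_parentGraph (hp : IsRootedForest {r} p) :
    (parentGraph p).edgeSet = (fun v => s(v, p v)) '' {r}ᶜ := by
  ext e
  induction e using Sym2.ind with
  | _ a b =>
  simp only [SimpleGraph.mem_edgeSet, Set.mem_image, Set.mem_compl_singleton_iff]
  constructor
  · intro h
    rcases hp.eq_apply_or_of_adj h with rfl | ⟨hb, rfl⟩
    · exact ⟨a, fun ha => (parentGraph_adj.mp h).1 (by rw [ha, hp.apply_root]), rfl⟩
    · exact ⟨b, hb, Sym2.eq_swap⟩
  · rintro ⟨v, hv, hve⟩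
    rw [← SimpleGraph.mem_edgeSet, ← hve]
    exact hp.adj_apply hv

theorem injOn_edge (hp : IsRootedForest {r} p) : Set.InjOn (fun v => s(v, p v)) {r}ᶜ := by
  intro a ha b hb hab
  rcases Sym2.eq_iff.mp hab with ⟨h, -⟩ | ⟨hab, hba⟩
  · exact h
  · have ha' := hp.dist_apply_add_one ha
    have hb' := hp.dist_apply_add_one hb
    rw [hba] at ha'
    rw [← hab] at hb'
    omega

theorem isTree_parentGraph [Finite V] (hp : IsRootedForest {r} p) : (parentGraph p).IsTree := by
  rw [SimpleGraph.isTree_iff_connected_and_card, Nat.card_coe_set_eq, hp.edgeSet_parentGraph,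
    hp.injOn_edge.ncard_image, Set.ncard_compl, Set.ncard_singleton]
  have : 0 < Nat.card V := Nat.card_pos_iff.mpr ⟨⟨r⟩, inferInstance⟩
  exact ⟨hp.connected_parentGraph, by omega⟩

end IsRootedForest

theorem SimpleGraph.IsTree.parentGraph_parentToward {g : SimpleGraph V} (hg : g.IsTree) (r : V) :
    parentGraph (parentToward g r) = g :=
  (SimpleGraph.isTree_iff_minimal_connected.mp hg).eq_of_le
    hg.connected.isRootedForest_parentToward.connected_parentGraph
    hg.connected.parentGraph_parentToward_le

noncomputable def treeEquivRootedForest [Finite V] (r : V) :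
    {g : SimpleGraph V // g.IsTree} ≃ {p : V → V // IsRootedForest {r} p} where
  toFun g := ⟨parentToward g r, g.2.connected.isRootedForest_parentToward⟩
  invFun p := ⟨parentGraph p, p.2.isTree_parentGraph⟩
  left_inv g := Subtype.ext (g.2.parentGraph_parentToward r)
  right_inv p := Subtype.ext p.2.parentToward_parentGraph

end ParentGraph

section Uprooted

variable {V : Type*} [LinearOrder V] [Fintype V]

theorem card_rootedForest_singleton_children_lt_mul (r : V) :
    Nat.card {p : V → V // IsRootedForest {r} p ∧ ∀ v ≠ r, p v = r → v < r} *
        (Fintype.card V - 1) =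
      #{x | x < r} * (Fintype.card V - 1) ^ (Fintype.card V - 1 - #{x | x < r}) *
        Fintype.card V ^ (#{x | x < r} - 1) := by
  set t := Fintype.card V - 1
  set a := #{x | x < r}
  have ht : Fintype.card {x // x ∉ ({r} : Finset V)} = t := by
    simp [t, Fintype.card_subtype_compl]
  have hat : a ≤ t := by
    have : a < Fintype.card V := card_lt_univ_of_notMem (x := r) (by simp)
    omega
  let smalls : Finset {x // x ∉ ({r} : Finset V)} := ({x | x < r} : Finset V).subtype _
  have hsmalls : #smalls = a := by
    rw [card_subtype, filter_true_of_mem fun x hx => by simpa using (mem_filter.mp hx).2.ne]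
  have hcard : Nat.card {p : V → V // IsRootedForest {r} p ∧ ∀ v ≠ r, p v = r → v < r} =
      Nat.card {p : V → V // IsRootedForest {r} p ∧ rootChildren {r} p ∈ smalls.powerset} :=
    Nat.card_congr <| Equiv.subtypeEquivRight fun p => and_congr_right fun _ => by
      simp [rootChildren, smalls, subset_iff]
  rw [hcard, card_rootedForest_rootChildren_mem, sum_mul]
  have hV : Fintype.card V = t + 1 := by
    have := Fintype.card_pos_iff.mpr ⟨r⟩
    omega
  calc ∑ J ∈ smalls.powerset, #{r} ^ #J * Nat.card {q // IsRootedForest J q} * t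
      = ∑ J ∈ smalls.powerset, #J * t ^ (t - #J) :=
        sum_congr rfl fun J _ => by
          rw [card_singleton, one_pow, one_mul, ← ht, card_rootedForest_mul_card]
    _ = a * t ^ (t - a) * (t + 1) ^ (a - 1) := by
        rw [sum_powerset_apply_card (fun j => j * t ^ (t - j)), hsmalls]
        exact sum_range_choose_mul_mul_pow_sub hat
    _ = _ := by rw [hV]

noncomputable def uprootedTreeEquiv (r : V) :
    {g : SimpleGraph V // g.IsTree ∧ ∀ v, g.Adj r v → v < r} ≃
      {p : V → V // IsRootedForest {r} p ∧ ∀ v ≠ r, p v = r → v < r} :=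
  (Equiv.subtypeSubtypeEquivSubtypeInter _ _).symm.trans <|
    ((treeEquivRootedForest r).subtypeEquiv fun g => by
      conv_lhs => rw [← g.2.parentGraph_parentToward r]
      simp only [g.2.connected.isRootedForest_parentToward.parentGraph_adj_root, and_imp]
      rfl).trans
    (Equiv.subtypeSubtypeEquivSubtypeInter _ _)

theorem card_uprootedTrees_eq_sum :
    Nat.card {q : SimpleGraph V × V // q.1.IsTree ∧ ∀ v, q.1.Adj q.2 v → v < q.2} =
      ∑ r, Nat.card {p : V → V // IsRootedForest {r} p ∧ ∀ v ≠ r, p v = r → v < r} := by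
  rw [Nat.card_congr (((Equiv.prodComm _ _).subtypeEquiv (p := fun q : SimpleGraph V × V =>
      q.1.IsTree ∧ ∀ v, q.1.Adj q.2 v → v < q.2) fun _ => Iff.rfl).trans
    (Equiv.subtypeProdEquivSigmaSubtype fun r (g : SimpleGraph V) =>
      g.IsTree ∧ ∀ v, g.Adj r v → v < r)), Nat.card_sigma]
  exact sum_congr rfl fun r _ => Nat.card_congr (uprootedTreeEquiv r)

end Uprooted

theorem card_uprootedTrees_fin_mul (t : ℕ) :
    Nat.card {q : SimpleGraph (Fin (t + 1)) × Fin (t + 1) //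
        q.1.IsTree ∧ ∀ v, q.1.Adj q.2 v → v < q.2} * t = t ^ (t + 1) := by
  rw [card_uprootedTrees_eq_sum, sum_mul]
  have key := fun r : Fin (t + 1) => card_rootedForest_singleton_children_lt_mul r
  simp only [Fintype.card_fin, Nat.add_sub_cancel, filter_gt_eq_Iio, Fin.card_Iio] at key
  rw [sum_congr rfl fun r _ => key r,
    Fin.sum_univ_eq_sum_range (fun a => a * t ^ (t - a) * (t + 1) ^ (a - 1))]
  have abel := sum_range_mul_pow_mul_add_one_pow (t : ℤ) t
  rw [sub_self, zero_mul, add_zero] at abel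
  exact_mod_cast abel

/-- The number of uprooted trees on `[n]`, i.e. rooted labeled trees on vertex set
`Fin n` in which the root is larger than all of its children (its neighbors),
is `(n-1)^(n-1)`. -/
theorem stmt10 (n : ℕ) (hn : 1 ≤ n) :
    Nat.card {p : SimpleGraph (Fin n) × Fin n //
        p.1.IsTree ∧ ∀ v : Fin n, p.1.Adj p.2 v → v < p.2} =
      (n - 1) ^ (n - 1) := by
  rcases hn.eq_or_lt with rfl | hn
  · exact Nat.card_eq_one_iff_unique.mpr
      ⟨inferInstance, ⟨⟨(⊥, 0), .of_subsingleton, fun v h => absurd h (by simp)⟩⟩⟩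
  · obtain ⟨t, rfl⟩ : ∃ t, n = t + 1 := ⟨n - 1, by omega⟩
    exact Nat.eq_of_mul_eq_mul_right (by omega : 0 < t)
      (by rw [Nat.add_sub_cancel, card_uprootedTrees_fin_mul, pow_succ])
end

section
/- For n ≥ 2, the map sending a spherical parking function (a_1,...,a_n) to the tuple (k_1, ..., k_{n-2}), where k_j is the number of indices i with a_i = n-j, is a surjection onto the set of nonnegative integer tuples with partial sums k_1 + ⋯ + k_j ≤ j for all j, and the fiber over (k_1,...,k_{n-2}) has cardinality C(n, k_1)·C(n-k_1, k_2)·⋯·C(n-(k_1+⋯+k_{n-3}), k_{n-2}). -/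
/-- A spherical parking function: positive entries whose nondecreasing rearrangement
`c` satisfies `c_1 = 1` and `c_i < i` for `i ≥ 2`. -/
def IsSPF {n : ℕ} (hn : 1 ≤ n) (a : Fin n → ℕ) : Prop :=
  (∀ i, 1 ≤ a i) ∧ sortedSeq a ⟨0, hn⟩ = 1 ∧
    ∀ i : Fin n, 1 ≤ i.val → sortedSeq a i < i.val + 1

/-- `K a j` counts the entries of `a` equal to `n - (j+1)` (the number of entries
equal to `n-1` for `j = 0`, i.e. the paper's `k_{j+1}`). -/
def Kvec {n : ℕ} (a : Fin n → ℕ) : Fin (n - 2) → ℕ :=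
  fun j => (Finset.univ.filter (fun i => a i = n - (j.val + 1))).card

open Finset

lemma card_filter_comp_perm {n : ℕ} (a : Fin n → ℕ) (σ : Equiv.Perm (Fin n))
    (p : ℕ → Prop) [DecidablePred p] :
    (univ.filter (fun i => p (a (σ i)))).card = (univ.filter (fun i => p (a i))).card := by
  apply Finset.card_bij (fun i _ => σ i)
  · intro i hi; simp only [mem_filter, mem_univ, true_and] at hi ⊢; exact hi
  · intro i _ j _ h; exact σ.injective h
  · intro b hb
    refine ⟨σ⁻¹ b, ?_, by simp⟩
    simp only [mem_filter, mem_univ, true_and] at hb ⊢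
    simpa using hb

lemma card_val_ge (n v : ℕ) : (univ.filter (fun i : Fin n => v ≤ i.val)).card = n - v := by
  rcases lt_or_ge v n with h | h
  · have : (univ.filter (fun i : Fin n => v ≤ i.val)) = Finset.Ici (⟨v, h⟩ : Fin n) := by
      ext i; simp [Fin.le_def]
    rw [this, Fin.card_Ici]
  · rw [Finset.filter_false_of_mem, Finset.card_empty]
    · omega
    · intro i _
      have := i.isLt
      omega

lemma isSPF_iff {n : ℕ} (hn : 1 ≤ n) (a : Fin n → ℕ) :
    IsSPF hn a ↔ ((∀ i, 1 ≤ a i) ∧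
      ∀ v, 2 ≤ v → (univ.filter (fun x => v ≤ a x)).card ≤ n - v) := by
  have hcnt : ∀ v : ℕ, (univ.filter (fun x => v ≤ a x)).card
      = (univ.filter (fun x => v ≤ sortedSeq a x)).card :=
    fun v => (card_filter_comp_perm a (Tuple.sort a) (fun t => v ≤ t)).symm
  have hmono : Monotone (sortedSeq a) := Tuple.monotone_sort a
  constructor
  · rintro ⟨hpos, h0, hlt⟩
    refine ⟨hpos, fun v hv => ?_⟩
    rw [hcnt v]
    calc (univ.filter (fun x => v ≤ sortedSeq a x)).card
        ≤ (univ.filter (fun i : Fin n => v ≤ i.val)).card := by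
          apply Finset.card_le_card
          intro i hi
          simp only [Finset.mem_filter, Finset.mem_univ, true_and] at hi ⊢
          rcases Nat.eq_zero_or_pos i.val with h0' | h1
          · exfalso
            have hi0 : i = ⟨0, hn⟩ := Fin.ext h0'
            rw [hi0] at hi; omega
          · have := hlt i h1; omega
      _ = n - v := card_val_ge n v
  · rintro ⟨hpos, hc⟩
    refine ⟨hpos, ?_, ?_⟩
    · have h1 : 1 ≤ sortedSeq a ⟨0, hn⟩ := hpos _
      by_contra hne
      have huniv : (univ : Finset (Fin n)) = univ.filter (fun x => 2 ≤ sortedSeq a x) := by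
        ext i
        simp only [Finset.mem_filter, Finset.mem_univ, true_and, true_iff]
        calc (2:ℕ) ≤ sortedSeq a ⟨0, hn⟩ := by omega
          _ ≤ sortedSeq a i := hmono (Fin.le_def.2 (Nat.zero_le _))
      have hcard := hc 2 le_rfl
      rw [hcnt 2, ← huniv, Finset.card_univ, Fintype.card_fin] at hcard
      omega
    · intro i hi
      by_contra hlt
      push_neg at hlt
      have hv2 : 2 ≤ i.val + 1 := by omega
      have hsub : (univ.filter (fun j : Fin n => i.val ≤ j.val))
          ⊆ univ.filter (fun x => i.val + 1 ≤ sortedSeq a x) := by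
        intro j hj
        simp only [mem_filter, mem_univ, true_and] at hj ⊢
        exact le_trans hlt (hmono (Fin.le_def.2 hj))
      have h2 := Finset.card_le_card hsub
      rw [card_val_ge] at h2
      have h3 := hc (i.val + 1) hv2
      rw [hcnt] at h3
      have hiv := i.isLt
      omega
def Spart (n : ℕ) (k : Fin (n-2) → ℕ) (m : ℕ) : ℕ :=
  ∑ i ∈ univ.filter (fun i : Fin (n-2) => i.val < m), k i

def Aset (n : ℕ) (k : Fin (n-2) → ℕ) (m : ℕ) : Finset (Fin n → Fin n) :=
  univ.filter (fun f =>
    (∀ x, (f x : ℕ) = 1 ∨ ∃ j : Fin (n-2), j.val < m ∧ (f x : ℕ) = n - (j.val+1)) ∧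
    ∀ j : Fin (n-2), j.val < m →
      (univ.filter (fun x => ((f x : ℕ) = n - (j.val+1)))).card = k j)

lemma mem_Aset {n : ℕ} {k : Fin (n-2) → ℕ} {m : ℕ} {f : Fin n → Fin n} :
    f ∈ Aset n k m ↔
    ((∀ x, (f x : ℕ) = 1 ∨ ∃ j : Fin (n-2), j.val < m ∧ (f x : ℕ) = n - (j.val+1)) ∧
    ∀ j : Fin (n-2), j.val < m →
      (univ.filter (fun x => ((f x : ℕ) = n - (j.val+1)))).card = k j) := by
  simp [Aset]

lemma Spart_succ {n : ℕ} (k : Fin (n-2) → ℕ) {m : ℕ} (hm : m < n-2) :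
    Spart n k (m+1) = Spart n k m + k ⟨m, hm⟩ := by
  unfold Spart
  have h : univ.filter (fun i : Fin (n-2) => i.val < m+1)
      = insert ⟨m, hm⟩ (univ.filter (fun i : Fin (n-2) => i.val < m)) := by
    ext i
    simp only [mem_filter, mem_univ, true_and, Finset.mem_insert, Fin.ext_iff]
    omega
  rw [h, Finset.sum_insert (by simp), add_comm]

lemma Spart_le {n : ℕ} {k : Fin (n-2) → ℕ}
    (H : ∀ j : Fin (n-2), Spart n k (j.val+1) ≤ j.val + 1) :
    ∀ m, m ≤ n-2 → Spart n k m ≤ m := by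
  intro m hm
  match m with
  | 0 =>
    have : (univ.filter (fun i : Fin (n-2) => i.val < 0)) = ∅ := by
      ext i; simp
    simp [Spart, this]
  | (t+1) => exact H ⟨t, by omega⟩
lemma cardA {n : ℕ} (hn : 2 ≤ n) (k : Fin (n-2) → ℕ)
    (H : ∀ j : Fin (n-2), Spart n k (j.val+1) ≤ j.val + 1) :
    ∀ m, m ≤ n-2 → (Aset n k m).card
      = ∏ j ∈ univ.filter (fun j : Fin (n-2) => j.val < m),
          Nat.choose (n - Spart n k j.val) (k j) := by
  intro m
  induction m with
  | zero =>
    intro _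
    have hfe : (univ.filter (fun j : Fin (n-2) => j.val < 0)) = ∅ := by ext i; simp
    rw [hfe, Finset.prod_empty]
    rw [Finset.card_eq_one]
    refine ⟨fun _ => ⟨1, by omega⟩, ?_⟩
    ext f
    rw [mem_Aset, Finset.mem_singleton]
    constructor
    · rintro ⟨hval, -⟩
      funext x
      rcases hval x with h | ⟨j, hj, -⟩
      · exact Fin.ext h
      · omega
    · rintro rfl
      refine ⟨fun x => Or.inl rfl, fun j hj => by omega⟩
  | succ m ih =>
    intro hm1
    have hm : m < n - 2 := by omega
    have ihm := ih (by omega)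
    set jm : Fin (n-2) := ⟨m, hm⟩ with hjm
    have hvm2 : 2 ≤ n - (m+1) := by omega
    have hvmn : n - (m+1) < n := by omega
    set φ : (Fin n → Fin n) → (Fin n → Fin n) :=
      fun f x => if (f x : ℕ) = n - (m+1) then ⟨1, by omega⟩ else f x with hφ
    -- step 1 : φ maps A (m+1) into A m
    have hmaps : ∀ f ∈ Aset n k (m+1), φ f ∈ Aset n k m := by
      intro f hf
      rw [mem_Aset] at hf ⊢
      obtain ⟨hval, hcard⟩ := hf
      constructor
      · intro x
        by_cases hx : (f x : ℕ) = n - (m+1)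
        · left; simp [hφ, hx]
        · have : φ f x = f x := by simp [hφ, hx]
          rw [this]
          rcases hval x with h | ⟨j, hj, hjx⟩
          · exact Or.inl h
          · refine Or.inr ⟨j, ?_, hjx⟩
            have := j.isLt
            omega
      · intro j hj
        have hne : n - (j.val+1) ≠ n - (m+1) := by have := j.isLt; omega
        have : (univ.filter (fun x => ((φ f x : ℕ) = n - (j.val+1))))
            = (univ.filter (fun x => ((f x : ℕ) = n - (j.val+1)))) := by
          ext x
          simp only [mem_filter, mem_univ, true_and]
          by_cases hx : (f x : ℕ) = n - (m+1)
          · simp [hφ, hx]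
            omega
          · simp [hφ, hx]
        rw [this]
        exact hcard j (by omega)
    rw [Finset.card_eq_sum_card_fiberwise hmaps]
    -- step 3 : each fiber has card choose (n - Spart n k m) (k jm)
    have hfiber : ∀ g ∈ Aset n k m,
        ((Aset n k (m+1)).filter (fun f => φ f = g)).card
          = Nat.choose (n - Spart n k m) (k jm) := by
      intro g hg
      rw [mem_Aset] at hg
      obtain ⟨hgval, hgcard⟩ := hg
      have hgvm : ∀ x, (g x : ℕ) ≠ n - (m+1) := by
        intro x
        rcases hgval x with h | ⟨j, hj, hjx⟩
        · omega
        · have := j.isLt; omega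
      set Z : Finset (Fin n) := univ.filter (fun x => (g x : ℕ) = 1) with hZ
      -- card of Z
      have hSm : Spart n k m ≤ m := Spart_le H m (by omega)
      have hZcard : Z.card = n - Spart n k m := by
        set B : Finset (Fin n) := (univ.filter (fun j : Fin (n-2) => j.val < m)).biUnion
          (fun j => univ.filter (fun x => (g x : ℕ) = n - (j.val+1))) with hB
        have hdisj : ∀ j1 ∈ univ.filter (fun j : Fin (n-2) => j.val < m),
            ∀ j2 ∈ univ.filter (fun j : Fin (n-2) => j.val < m), j1 ≠ j2 →
            Disjoint (univ.filter (fun x => (g x : ℕ) = n - (j1.val+1)))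
              (univ.filter (fun x => (g x : ℕ) = n - (j2.val+1))) := by
          intro j1 hj1 j2 hj2 hne
          rw [Finset.disjoint_left]
          intro x hx1 hx2
          simp only [mem_filter, mem_univ, true_and] at hx1 hx2
          apply hne
          apply Fin.ext
          have := j1.isLt; have := j2.isLt
          omega
        have hBcard : B.card = Spart n k m := by
          rw [hB, Finset.card_biUnion hdisj, Spart]
          exact Finset.sum_congr rfl (fun j hj => by
            simp only [mem_filter, mem_univ, true_and] at hj
            exact hgcard j hj)
        have hZB : Disjoint Z B := by
          rw [Finset.disjoint_left]
          intro x hx hxB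
          rw [hZ, mem_filter] at hx
          rw [hB, Finset.mem_biUnion] at hxB
          obtain ⟨-, hx⟩ := hx
          obtain ⟨j, -, hxj⟩ := hxB
          rw [mem_filter] at hxj
          obtain ⟨-, hxj⟩ := hxj
          have := j.isLt
          omega
        have hunion : Z ∪ B = univ := by
          ext x
          simp only [Finset.mem_union, hZ, hB, mem_filter, mem_univ, true_and,
            Finset.mem_biUnion, iff_true]
          rcases hgval x with h | ⟨j, hj, hjx⟩
          · exact Or.inl h
          · exact Or.inr ⟨j, hj, hjx⟩
        have := Finset.card_union_of_disjoint hZB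
        rw [hunion, Finset.card_univ, Fintype.card_fin] at this
        omega
      -- the bijection with powersetCard
      rw [← hZcard, ← Finset.card_powersetCard]
      refine Finset.card_bij'
        (fun f _ => univ.filter (fun x => (f x : ℕ) = n - (m+1)))
        (fun s _ => fun x => if x ∈ s then (⟨n - (m+1), by omega⟩ : Fin n) else g x)
        ?_ ?_ ?_ ?_
      · -- forward membership
        intro f hf
        simp only [Finset.mem_filter] at hf
        obtain ⟨hfA, hfφ⟩ := hf
        rw [mem_Aset] at hfA
        obtain ⟨hfval, hfcard⟩ := hfA
        rw [Finset.mem_powersetCard]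
        constructor
        · intro x hx
          simp only [mem_filter, mem_univ, true_and] at hx
          simp only [hZ, mem_filter, mem_univ, true_and]
          have : φ f x = g x := congrFun hfφ x
          simp only [hφ, hx, if_pos] at this
          rw [← this]
        · exact hfcard jm (by simp [hjm])
      · -- backward membership
        intro s hs
        rw [Finset.mem_powersetCard] at hs
        obtain ⟨hsZ, hscard⟩ := hs
        have hsg : ∀ x ∈ s, (g x : ℕ) = 1 := by
          intro x hx
          have := hsZ hx
          simpa [hZ] using this
        simp only [Finset.mem_filter]
        constructor
        · rw [mem_Aset]
          constructor
          · intro x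
            by_cases hx : x ∈ s
            · refine Or.inr ⟨jm, by simp [hjm], ?_⟩
              simp [hx, hjm]
            · simp only [hx, if_neg, ite_false]
              rcases hgval x with h | ⟨j, hj, hjx⟩
              · exact Or.inl h
              · exact Or.inr ⟨j, by omega, hjx⟩
          · intro j hj
            rcases Nat.lt_or_ge j.val m with hjm' | hjm'
            · have hne1 : n - (j.val+1) ≠ n - (m+1) := by have := j.isLt; omega
              have hne2 : n - (j.val+1) ≠ 1 := by have := j.isLt; omega
              have heq : (univ.filter (fun x =>
                  (((if x ∈ s then (⟨n - (m+1), by omega⟩ : Fin n) else g x) : Fin n) : ℕ)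
                    = n - (j.val+1)))
                  = univ.filter (fun x => (g x : ℕ) = n - (j.val+1)) := by
                ext x
                simp only [mem_filter, mem_univ, true_and]
                by_cases hx : x ∈ s
                · simp only [hx, ite_true]
                  have := hsg x hx
                  constructor
                  · intro h; exact absurd h.symm hne1
                  · intro h; omega
                · simp [hx]
              rw [heq]
              exact hgcard j hjm'
            · have hjeq : j = jm := Fin.ext (by simp [hjm]; omega)
              subst hjeq
              have heq : (univ.filter (fun x =>
                  (((if x ∈ s then (⟨n - (m+1), by omega⟩ : Fin n) else g x) : Fin n) : ℕ)
                    = n - (jm.val+1))) = s := by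
                ext x
                simp only [mem_filter, mem_univ, true_and]
                by_cases hx : x ∈ s
                · simp [hx, hjm]
                · simp only [hx, ite_false, iff_false]
                  exact hgvm x
              rw [heq]
              exact hscard
        · -- φ (j s) = g
          funext x
          by_cases hx : x ∈ s
          · simp only [hφ, hx, ite_true]
            exact Fin.ext (by simpa using (hsg x hx).symm)
          · simp only [hφ, hx, ite_false]
            exact if_neg (hgvm x)
      · -- left inverse
        intro f hf
        simp only [Finset.mem_filter] at hf
        obtain ⟨-, hfφ⟩ := hf
        funext x
        by_cases hx : (f x : ℕ) = n - (m+1)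
        · simp only [mem_filter, mem_univ, true_and, hx, ite_true]
          exact Fin.ext hx.symm
        · simp only [mem_filter, mem_univ, true_and, hx, ite_false]
          have h2 : φ f x = g x := congrFun hfφ x
          simp only [hφ, hx, ite_false] at h2
          exact h2.symm
      · -- right inverse
        intro s hs
        rw [Finset.mem_powersetCard] at hs
        obtain ⟨hsZ, -⟩ := hs
        ext x
        simp only [mem_filter, mem_univ, true_and]
        by_cases hx : x ∈ s
        · simp [hx]
        · simp only [hx, ite_false, iff_false]
          exact fun h => (hgvm x) h
    rw [Finset.sum_congr rfl hfiber, Finset.sum_const, ihm]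
    have hins : univ.filter (fun j : Fin (n-2) => j.val < m+1)
        = insert jm (univ.filter (fun j : Fin (n-2) => j.val < m)) := by
      ext i
      simp only [mem_filter, mem_univ, true_and, Finset.mem_insert, Fin.ext_iff, hjm]
      omega
    rw [hins, Finset.prod_insert (by simp [hjm]), smul_eq_mul]
    have : Spart n k jm.val = Spart n k m := by simp [hjm]
    rw [this, mul_comm]
lemma sum_fibers {n : ℕ} (a : Fin n → ℕ) (ha : ∀ x, a x < n)
    {j0 : ℕ} (hj0 : j0 < n-2) :
    ∑ i ∈ univ.filter (fun i : Fin (n-2) => i.val ≤ j0),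
      (univ.filter (fun x => a x = n - (i.val+1))).card
      = (univ.filter (fun x => n - (j0+1) ≤ a x)).card := by
  have hdisj : ∀ i1 ∈ univ.filter (fun i : Fin (n-2) => i.val ≤ j0),
      ∀ i2 ∈ univ.filter (fun i : Fin (n-2) => i.val ≤ j0), i1 ≠ i2 →
      Disjoint (univ.filter (fun x => a x = n - (i1.val+1)))
        (univ.filter (fun x => a x = n - (i2.val+1))) := by
    intro i1 _ i2 _ hne
    rw [Finset.disjoint_left]
    intro x hx1 hx2
    simp only [mem_filter, mem_univ, true_and] at hx1 hx2
    exact hne (Fin.ext (by have := i1.isLt; have := i2.isLt; omega))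
  rw [← Finset.card_biUnion hdisj]
  congr 1
  ext x
  simp only [Finset.mem_biUnion, mem_filter, mem_univ, true_and]
  constructor
  · rintro ⟨i, hi, hx⟩
    have := i.isLt
    omega
  · intro hx
    have hax := ha x
    refine ⟨⟨n - a x - 1, by omega⟩, ?_, ?_⟩ <;> simp <;> omega

lemma spf_lt {n : ℕ} (hn : 2 ≤ n) (hn1 : 1 ≤ n) (a : Fin n → ℕ) (h : IsSPF hn1 a) :
    ∀ x, a x < n := by
  rw [isSPF_iff] at h
  obtain ⟨-, hc⟩ := h
  intro x
  by_contra hx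
  push_neg at hx
  have h1 := hc n (by omega)
  have hxmem : x ∈ univ.filter (fun y => n ≤ a y) := by
    simp only [mem_filter, mem_univ, true_and]; exact hx
  have h2 := Finset.card_pos.2 ⟨x, hxmem⟩
  omega

lemma H_of_hk {n : ℕ} (k : Fin (n-2) → ℕ)
    (hk : ∀ j : Fin (n-2), (∑ i ∈ univ.filter (· ≤ j), k i) ≤ j.val + 1) :
    ∀ j : Fin (n-2), Spart n k (j.val+1) ≤ j.val + 1 := by
  intro j
  have hfe : univ.filter (fun i : Fin (n-2) => i.val < j.val+1) = univ.filter (· ≤ j) := by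
    ext i
    simp only [mem_filter, mem_univ, true_and, Fin.le_def]
    omega
  rw [Spart, hfe]
  exact hk j

lemma A_dir1 {n : ℕ} (hn : 2 ≤ n) (hn1 : 1 ≤ n) (k : Fin (n-2) → ℕ)
    (H : ∀ j : Fin (n-2), Spart n k (j.val+1) ≤ j.val + 1) (f : Fin n → Fin n)
    (hf : f ∈ Aset n k (n-2)) :
    IsSPF hn1 (fun x => (f x : ℕ)) ∧ Kvec (fun x => (f x : ℕ)) = k := by
  rw [mem_Aset] at hf
  obtain ⟨hval, hcardf⟩ := hf
  have hbound : ∀ x, ((f x : ℕ)) < n := by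
    intro x
    rcases hval x with h | ⟨j, hj, hjx⟩
    · omega
    · have := j.isLt; omega
  have hKv : Kvec (fun x => (f x : ℕ)) = k := by
    funext j
    have := hcardf j j.isLt
    simpa [Kvec] using this
  refine ⟨?_, hKv⟩
  rw [isSPF_iff]
  constructor
  · intro x
    rcases hval x with h | ⟨j, hj, hjx⟩
    · omega
    · have := j.isLt; omega
  · intro v hv
    rcases le_or_gt n v with hvn | hvn
    · have he : (univ.filter (fun x => v ≤ (f x : ℕ))) = ∅ := by
        rw [Finset.filter_false_of_mem]
        intro x _
        have := hbound x
        omega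
      rw [he, Finset.card_empty]
      omega
    · have hj0 : n - v - 1 < n - 2 := by omega
      have hs := sum_fibers (fun x => (f x : ℕ)) hbound hj0
      have hvv : n - ((n - v - 1) + 1) = v := by omega
      rw [hvv] at hs
      rw [← hs]
      have hsum : ∑ i ∈ univ.filter (fun i : Fin (n-2) => i.val ≤ n - v - 1),
          (univ.filter (fun x => (f x : ℕ) = n - (i.val+1))).card = Spart n k (n - v) := by
        rw [Spart]
        apply Finset.sum_congr
        · ext i
          simp only [mem_filter, mem_univ, true_and]
          omega
        · intro j _
          exact hcardf j j.isLt
      rw [hsum]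
      have h2 := H ⟨n - v - 1, hj0⟩
      simp only [Fin.val_mk] at h2
      have he : n - v - 1 + 1 = n - v := by omega
      rw [he] at h2
      omega

lemma A_dir2 {n : ℕ} (hn : 2 ≤ n) (hn1 : 1 ≤ n) (k : Fin (n-2) → ℕ)
    (a : Fin n → ℕ) (hspf : IsSPF hn1 a) (hK : Kvec a = k) :
    ∃ f ∈ Aset n k (n-2), (fun x => ((f x : ℕ))) = a := by
  have hbound := spf_lt hn hn1 a hspf
  rw [isSPF_iff] at hspf
  obtain ⟨hpos, hc⟩ := hspf
  refine ⟨fun x => ⟨a x, hbound x⟩, ?_, rfl⟩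
  rw [mem_Aset]
  constructor
  · intro x
    by_cases h1 : a x = 1
    · exact Or.inl h1
    · have h2 : 2 ≤ a x := by have := hpos x; omega
      have h3 := hbound x
      refine Or.inr ⟨⟨n - a x - 1, by omega⟩, by simp; omega, by simp; omega⟩
  · intro j _
    have := congrFun hK j
    simpa [Kvec] using this

open Finset in
/-- The map `a ↦ (k_1, …, k_{n-2})` with `k_j = #{i : a_i = n-j}` maps spherical
parking functions onto the tuples with partial sums `k_1 + ⋯ + k_j ≤ j`, and the
fiber over `k` has cardinality `C(n,k_1) C(n-k_1,k_2) ⋯ C(n-(k_1+⋯+k_{n-3}), k_{n-2})`. -/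
theorem stmt13 (n : ℕ) (hn : 2 ≤ n) :
    (∀ a : Fin n → ℕ, IsSPF (by omega) a →
      ∀ j : Fin (n - 2), (∑ i ∈ Finset.univ.filter (· ≤ j), Kvec a i) ≤ j.val + 1) ∧
    (∀ k : Fin (n - 2) → ℕ,
      (∀ j : Fin (n - 2), (∑ i ∈ Finset.univ.filter (· ≤ j), k i) ≤ j.val + 1) →
      ∃ a : Fin n → ℕ, IsSPF (by omega) a ∧ Kvec a = k) ∧
    (∀ k : Fin (n - 2) → ℕ,
      (∀ j : Fin (n - 2), (∑ i ∈ Finset.univ.filter (· ≤ j), k i) ≤ j.val + 1) →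
      Set.ncard {a : Fin n → ℕ | IsSPF (by omega) a ∧ Kvec a = k} =
        ∏ j : Fin (n - 2),
          Nat.choose (n - ∑ i ∈ Finset.univ.filter (· < j), k i) (k j)) := by
  refine ⟨?_, ?_, ?_⟩
  · -- part 1
    intro a ha j
    have hbound := spf_lt hn (by omega) a ha
    rw [isSPF_iff] at ha
    obtain ⟨hpos, hc⟩ := ha
    have hj2 : 2 ≤ n - (j.val + 1) := by have := j.isLt; omega
    have hs := sum_fibers a hbound j.isLt
    have hfilter : (univ.filter (· ≤ j)) = univ.filter (fun i : Fin (n-2) => i.val ≤ j.val) := by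
      ext i
      simp only [mem_filter, mem_univ, true_and, Fin.le_def]
    have hKv : ∑ i ∈ univ.filter (fun i : Fin (n-2) => i.val ≤ j.val), Kvec a i
        = ∑ i ∈ univ.filter (fun i : Fin (n-2) => i.val ≤ j.val),
            (univ.filter (fun x => a x = n - (i.val+1))).card := rfl
    rw [hfilter, hKv, hs]
    have h3 := hc (n - (j.val+1)) hj2
    have := j.isLt
    omega
  · -- part 2
    intro k hk
    have H := H_of_hk k hk
    have hpos : 0 < (Aset n k (n-2)).card := by
      rw [cardA hn k H (n-2) le_rfl]
      apply Finset.prod_pos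
      intro j _
      apply Nat.choose_pos
      have h1 := H j
      have h2 := Spart_succ k j.isLt
      simp only [Fin.eta] at h2
      have := j.isLt
      omega
    obtain ⟨f, hf⟩ := Finset.card_pos.1 hpos
    obtain ⟨hspf, hKv⟩ := A_dir1 hn (by omega) k H f hf
    exact ⟨_, hspf, hKv⟩
  · -- part 3
    intro k hk
    have H := H_of_hk k hk
    have hinj : Function.Injective (fun (f : Fin n → Fin n) => (fun x => ((f x : ℕ)))) := by
      intro f g h
      funext x
      exact Fin.ext (congrFun h x)
    have hset : {a : Fin n → ℕ | IsSPF (by omega) a ∧ Kvec a = k}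
        = (fun (f : Fin n → Fin n) => (fun x => ((f x : ℕ)))) '' ↑(Aset n k (n-2)) := by
      ext a
      simp only [Set.mem_setOf_eq, Set.mem_image, Finset.mem_coe]
      constructor
      · rintro ⟨h1, h2⟩
        exact A_dir2 hn (by omega) k a h1 h2
      · rintro ⟨f, hf, rfl⟩
        exact A_dir1 hn (by omega) k H f hf
    rw [hset, Set.ncard_image_of_injective _ hinj, Set.ncard_coe_finset,
      cardA hn k H (n-2) le_rfl]
    have huniv : univ.filter (fun j : Fin (n-2) => j.val < n-2) = univ := by
      ext j
      simp [j.isLt]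
    rw [huniv]
    apply Finset.prod_congr rfl
    intro j _
    have hfe : univ.filter (fun i : Fin (n-2) => i.val < j.val) = univ.filter (· < j) := by
      ext i
      simp only [mem_filter, mem_univ, true_and, Fin.lt_def]
    simp only [Spart, hfe]
end

section
/- A sequence (a_1, ..., a_n) of nonnegative integers fails to be divisible by any of the monomials m_σ = ∏_{i∈σ} x_i^(n-|σ|+1), over all nonempty subsets σ ⊆ [n], if and only if it is a parking function (its nondecreasing rearrangement c satisfies c_i < i for all i). -/
/-- A sequence of nonnegative integers is not divisible by any of the monomials
`m_σ = ∏_{i ∈ σ} x_i^(n-|σ|+1)`, over all nonempty `σ ⊆ [n]`, iff it is a parking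
function. -/
theorem stmt15 (n : ℕ) (a : Fin n → ℕ) :
    (∀ σ : Finset (Fin n), σ.Nonempty → ∃ i ∈ σ, a i < n - σ.card + 1) ↔
      (∀ i : Fin n, sortedSeq a i < i.val + 1) := by
  have hmono := Tuple.monotone_sort a
  constructor
  · intro h i
    -- take σ = image of Ici i under sort
    set σ : Finset (Fin n) := (Finset.Ici i).image (Tuple.sort a) with hσ
    have hcard : σ.card = n - i.val := by
      rw [hσ, Finset.card_image_of_injective _ (Equiv.injective _), Fin.card_Ici]
    have hne : σ.Nonempty := ⟨Tuple.sort a i, Finset.mem_image_of_mem _ (Finset.mem_Ici.2 le_rfl)⟩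
    obtain ⟨x, hx, hax⟩ := h σ hne
    rw [hcard, Nat.sub_sub_self (le_of_lt i.isLt)] at hax
    obtain ⟨j, hj, rfl⟩ := Finset.mem_image.1 hx
    have : sortedSeq a i ≤ sortedSeq a j := hmono (Finset.mem_Ici.1 hj)
    exact lt_of_le_of_lt this hax
  · intro h σ hne
    set k := σ.card with hk
    have hk1 : 1 ≤ k := Finset.card_pos.2 hne
    have hkn : k ≤ n := by simpa using Finset.card_le_card (Finset.subset_univ σ)
    have hn : 0 < n := lt_of_lt_of_le hk1 hkn
    set σ' : Finset (Fin n) := σ.image (Tuple.sort a).symm with hσ'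
    have hcard' : σ'.card = k := by
      rw [hσ', Finset.card_image_of_injective _ (Equiv.injective _)]
    have hnk : n - k < n := by omega
    -- ∃ j ∈ σ', j.val ≤ n - k
    have hex : ∃ j ∈ σ', j.val ≤ n - k := by
      by_contra hcon
      push_neg at hcon
      have hsub : σ' ⊆ Finset.Ioi (⟨n - k, hnk⟩ : Fin n) := by
        intro j hj
        exact Finset.mem_Ioi.2 (hcon j hj)
      have := Finset.card_le_card hsub
      rw [hcard', Fin.card_Ioi] at this
      simp only [Fin.val_mk] at this
      omega
    obtain ⟨j, hj, hjle⟩ := hex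
    refine ⟨Tuple.sort a j, ?_, ?_⟩
    · obtain ⟨x, hx, rfl⟩ := Finset.mem_image.1 hj
      simpa using hx
    · have h1 : a (Tuple.sort a j) = sortedSeq a j := rfl
      have h2 : sortedSeq a j ≤ sortedSeq a ⟨n - k, hnk⟩ := hmono hjle
      have h3 := h ⟨n - k, hnk⟩
      simp only [Fin.val_mk] at h3
      rw [h1]
      omega
end

section
/- For n ≥ 1, the set of sequences (a_1,...,a_n) of nonnegative integers whose nondecreasing rearrangement c satisfies c_1 = 1 and c_i < i for i ≥ 2 is exactly the set of (u-parking functions for u = (2,0,1,1,...,1)) minus (the ordinary parking functions of length n), and these two sets (spherical and ordinary parking functions) are disjoint. -/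
def uSph (n : ℕ) : Fin n → ℕ :=
  fun i => if i.val = 0 then 2 else if i.val = 1 then 0 else 1

lemma rangeSum (m : ℕ) :
    ∑ k ∈ Finset.range m, (if k = 0 then 2 else if k = 1 then 0 else 1)
      = if m = 0 then 0 else if m = 1 then 2 else m := by
  induction m with
  | zero => simp
  | succ m ih =>
    rw [Finset.sum_range_succ, ih]
    rcases Nat.lt_or_ge m 2 with h | h
    · interval_cases m <;> simp
    · have h0 : m ≠ 0 := by omega
      have h1 : m ≠ 1 := by omega
      simp [h0, h1]

open Finset in
lemma sumU (n : ℕ) (j : Fin n) :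
    ∑ i ∈ Finset.univ.filter (· ≤ j), uSph n i = if j.val = 0 then 2 else j.val + 1 := by
  have hf : Finset.univ.filter (· ≤ j) = Finset.Iic j := by ext i; simp
  rw [hf]
  have : ∑ i ∈ Finset.Iic j, uSph n i
      = ∑ k ∈ Finset.range (j.val + 1), (if k = 0 then 2 else if k = 1 then 0 else 1) := by
    apply Finset.sum_nbij' (fun i => i.val) (fun k => ⟨k % n, Nat.mod_lt _ j.pos⟩)
    · intro i hi; simp at hi ⊢; omega
    · intro k hk; simp [Fin.le_def] at hk ⊢
      have : k < n := by omega
      rw [Nat.mod_eq_of_lt this]; omega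
    · intro i hi; simp at hi ⊢
      exact Fin.ext (by simp [Nat.mod_eq_of_lt i.isLt])
    · intro k hk; simp at hk ⊢
      have : k < n := by omega
      exact Nat.mod_eq_of_lt this
    · intro i hi; simp [uSph]
  rw [this, rangeSum]
  simp

open Finset in
/-- The spherical parking functions of length `n` are exactly the
`(2,0,1,…,1)`-parking functions that are not ordinary parking functions, and the
spherical and ordinary parking functions are disjoint. -/
theorem stmt19 (n : ℕ) (hn : 1 ≤ n) :
    {a : Fin n → ℕ |
        sortedSeq a ⟨0, hn⟩ = 1 ∧ ∀ i : Fin n, 1 ≤ i.val → sortedSeq a i < i.val + 1} =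
      {a : Fin n → ℕ |
          ∀ j : Fin n, sortedSeq a j < ∑ i ∈ Finset.univ.filter (· ≤ j), uSph n i} \
        {a : Fin n → ℕ | ∀ i : Fin n, sortedSeq a i < i.val + 1} ∧
    Disjoint
      {a : Fin n → ℕ |
          sortedSeq a ⟨0, hn⟩ = 1 ∧ ∀ i : Fin n, 1 ≤ i.val → sortedSeq a i < i.val + 1}
      {a : Fin n → ℕ | ∀ i : Fin n, sortedSeq a i < i.val + 1} := by
  constructor
  · ext a
    simp only [Set.mem_setOf_eq, Set.mem_diff, sumU]
    constructor
    · rintro ⟨h0, hrest⟩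
      refine ⟨fun j => ?_, fun hord => ?_⟩
      · by_cases hj : j.val = 0
        · have : j = ⟨0, hn⟩ := Fin.ext hj
          simp [this, hj, h0]
        · rw [if_neg hj]
          exact hrest j (by omega)
      · have := hord ⟨0, hn⟩
        simp [h0] at this
    · rintro ⟨hpark, hnord⟩
      push_neg at hnord
      obtain ⟨i, hi⟩ := hnord
      have hrest : ∀ i : Fin n, 1 ≤ i.val → sortedSeq a i < i.val + 1 := by
        intro k hk
        have := hpark k
        rw [if_neg (by omega)] at this
        exact this
      have hi0 : i.val = 0 := by
        by_contra h
        have := hrest i (by omega)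
        omega
      have : i = ⟨0, hn⟩ := Fin.ext hi0
      rw [this] at hi
      have := hpark ⟨0, hn⟩
      simp at this hi
      exact ⟨by omega, hrest⟩
  · rw [Set.disjoint_left]
    rintro a ⟨h0, -⟩ hord
    have := hord ⟨0, hn⟩
    simp [h0] at this
end
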